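/- arXiv:2406.04688 — 8 statements merged into one kernel-verified Lean document; each statement's English description precedes it below -/
import Mathlib

section
/- Let f be a bistable nonlinearity (as in the context) with antiderivative F(s) = ∫₀ˢ f(r) dr. Then there exist constants μ > 0, σ > 0 and δ ∈ (0, α] such that −F(s) + μ(s − δ)² ≥ σ for every s ∈ ℝ. -/
/-- For the (extended) bistable nonlinearity `f` with antiderivative `F`, there are
constants `μ > 0`, `σ > 0` and `δ ∈ (0, α]` such that `-F(s) + μ(s-δ)² ≥ σ` for all real `s`. -/
theorem stmt2 (f : ℝ → ℝ) (α : ℝ) (hf : ContDiff ℝ 1 f) (hα : α ∈ Set.Ioo (0:ℝ) 1)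
    (hf0 : f 0 = 0) (hfα : f α = 0) (hf1 : f 1 = 0)
    (hd0 : deriv f 0 < 0) (hdα : 0 < deriv f α) (hd1 : deriv f 1 < 0)
    (hneg : ∀ s ∈ Set.Ioo (0:ℝ) α, f s < 0) (hpos : ∀ s ∈ Set.Ioo α (1:ℝ), 0 < f s)
    (hint : 0 < ∫ s in (0:ℝ)..1, f s)
    (hext0 : ∀ s < (0:ℝ), f s = deriv f 0 * s)
    (hext1 : ∀ s > (1:ℝ), f s = deriv f 1 * (s - 1))
    (F : ℝ → ℝ) (hF : ∀ s : ℝ, F s = ∫ r in (0:ℝ)..s, f r) :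
    ∃ μ > (0:ℝ), ∃ σ > (0:ℝ), ∃ δ ∈ Set.Ioc (0:ℝ) α,
      ∀ s : ℝ, σ ≤ -F s + μ * (s - δ) ^ 2 := by
  obtain ⟨hα0, hα1⟩ := hα
  have hfc : Continuous f := hf.continuous
  have hii : ∀ a b : ℝ, IntervalIntegrable f MeasureTheory.volume a b :=
    fun a b => hfc.intervalIntegrable a b
  have hFcont : Continuous F := by
    have h := intervalIntegral.continuous_primitive hii 0
    have : F = fun s => ∫ r in (0:ℝ)..s, f r := funext hF
    rw [this]; exact h
  -- F α < 0
  have hFα : F α < 0 := by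
    rw [hF]
    have h1 : 0 < ∫ r in (0:ℝ)..α, -f r :=
      intervalIntegral.intervalIntegral_pos_of_pos_on ((hii 0 α).neg)
        (fun x hx => by have := hneg x hx; linarith) hα0
    rw [intervalIntegral.integral_neg] at h1
    linarith
  have hF1 : 0 < F 1 := by rw [hF]; exact hint
  -- sign facts for f
  have hfle : ∀ x ∈ Set.Icc (0:ℝ) α, f x ≤ 0 := by
    intro x hx
    rcases eq_or_lt_of_le hx.1 with h | h
    · rw [← h, hf0]
    rcases eq_or_lt_of_le hx.2 with h' | h'
    · rw [h', hfα]
    · exact (hneg x ⟨h, h'⟩).le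
  have hfge : ∀ x ∈ Set.Icc α (1:ℝ), 0 ≤ f x := by
    intro x hx
    rcases eq_or_lt_of_le hx.1 with h | h
    · rw [← h, hfα]
    rcases eq_or_lt_of_le hx.2 with h' | h'
    · rw [h', hf1]
    · exact (hpos x ⟨h, h'⟩).le
  have hfneg1 : ∀ x : ℝ, (1:ℝ) ≤ x → f x ≤ 0 := by
    intro x hx
    rcases eq_or_lt_of_le hx with h | h
    · rw [← h, hf1]
    · rw [hext1 x h]; nlinarith
  have hfpos0 : ∀ x : ℝ, x ≤ (0:ℝ) → 0 ≤ f x := by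
    intro x hx
    rcases eq_or_lt_of_le hx with h | h
    · rw [h, hf0]
    · rw [hext0 x h]; nlinarith
  -- global bound F s ≤ F 1
  have hFle : ∀ s : ℝ, F s ≤ F 1 := by
    intro s
    rcases le_or_gt s 0 with hs | hs
    · have h0 : (0:ℝ) ≤ ∫ r in s..(0:ℝ), f r :=
        intervalIntegral.integral_nonneg hs (fun u hu => hfpos0 u hu.2)
      have : F s ≤ 0 := by
        rw [hF, intervalIntegral.integral_symm]; linarith
      linarith
    rcases le_or_gt s α with hsα | hsα
    · have h0 : (0:ℝ) ≤ ∫ r in (0:ℝ)..s, -f r :=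
        intervalIntegral.integral_nonneg hs.le
          (fun u hu => by have := hfle u ⟨hu.1, hu.2.trans hsα⟩; linarith)
      rw [intervalIntegral.integral_neg] at h0
      have : F s ≤ 0 := by rw [hF]; linarith
      linarith
    rcases le_or_gt s 1 with hs1 | hs1
    · have hsplit : (∫ r in (0:ℝ)..s, f r) + ∫ r in s..(1:ℝ), f r =
          ∫ r in (0:ℝ)..(1:ℝ), f r :=
        intervalIntegral.integral_add_adjacent_intervals (hii 0 s) (hii s 1)
      have h0 : (0:ℝ) ≤ ∫ r in s..(1:ℝ), f r :=
        intervalIntegral.integral_nonneg hs1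
          (fun u hu => hfge u ⟨hsα.le.trans hu.1, hu.2⟩)
      rw [hF s, hF 1]; linarith
    · have hsplit : (∫ r in (0:ℝ)..(1:ℝ), f r) + ∫ r in (1:ℝ)..s, f r =
          ∫ r in (0:ℝ)..s, f r :=
        intervalIntegral.integral_add_adjacent_intervals (hii 0 1) (hii 1 s)
      have h0 : (0:ℝ) ≤ ∫ r in (1:ℝ)..s, -f r :=
        intervalIntegral.integral_nonneg hs1.le
          (fun u hu => by have := hfneg1 u hu.1; linarith)
      rw [intervalIntegral.integral_neg] at h0
      rw [hF s, hF 1]; linarith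
  set σ : ℝ := -F α / 2 with hσdef
  have hσ : 0 < σ := by simp only [hσdef]; linarith
  -- neighborhood of α where F < -σ
  obtain ⟨η, hη, hball⟩ : ∃ η > (0:ℝ), ∀ s : ℝ, |s - α| < η → F s < -σ := by
    have hmem : {s : ℝ | F s < -σ} ∈ nhds α := by
      apply (isOpen_lt hFcont continuous_const).mem_nhds
      show F α < -σ
      simp only [hσdef]; linarith
    rcases Metric.mem_nhds_iff.mp hmem with ⟨η, hη, hb⟩
    exact ⟨η, hη, fun s hs => hb (by simpa [Real.dist_eq] using hs)⟩
  set μ : ℝ := (F 1 + σ) / η ^ 2 with hμdef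
  have hμ : 0 < μ := by
    apply div_pos (by linarith) (by positivity)
  have hμη : μ * η ^ 2 = F 1 + σ := by
    rw [hμdef, div_mul_cancel₀ _ (by positivity)]
  refine ⟨μ, hμ, σ, hσ, α, ⟨hα0, le_refl α⟩, ?_⟩
  intro s
  rcases lt_or_ge (|s - α|) η with h | h
  · have h1 := hball s h
    nlinarith [sq_nonneg (s - α)]
  · have h2 : η ^ 2 ≤ (s - α) ^ 2 := by
      nlinarith [sq_abs (s - α), abs_nonneg (s - α)]
    have h3 := hFle s
    nlinarith
end

section
/- Let f be a bistable nonlinearity (as in the context) with antiderivative F(s) = ∫₀ˢ f(r) dr. Then there exists γ ∈ (0, 1/2) such that −F(z) ≥ −F(1) + γ(z − 1)² for all z ∈ ℝ. -/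
set_option maxHeartbeats 1000000

open intervalIntegral Set

/-- For the (extended) bistable nonlinearity `f` with antiderivative `F`, there is
`γ ∈ (0, 1/2)` with `-F(z) ≥ -F(1) + γ(z-1)²` for all `z`. -/
theorem stmt4 (f : ℝ → ℝ) (α : ℝ) (hf : ContDiff ℝ 1 f) (hα : α ∈ Set.Ioo (0:ℝ) 1)
    (hf0 : f 0 = 0) (hfα : f α = 0) (hf1 : f 1 = 0)
    (hd0 : deriv f 0 < 0) (hdα : 0 < deriv f α) (hd1 : deriv f 1 < 0)
    (hneg : ∀ s ∈ Set.Ioo (0:ℝ) α, f s < 0) (hpos : ∀ s ∈ Set.Ioo α (1:ℝ), 0 < f s)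
    (hint : 0 < ∫ s in (0:ℝ)..1, f s)
    (hext0 : ∀ s < (0:ℝ), f s = deriv f 0 * s)
    (hext1 : ∀ s > (1:ℝ), f s = deriv f 1 * (s - 1))
    (F : ℝ → ℝ) (hF : ∀ s : ℝ, F s = ∫ r in (0:ℝ)..s, f r) :
    ∃ γ ∈ Set.Ioo (0:ℝ) (1/2), ∀ z : ℝ, -F 1 + γ * (z - 1) ^ 2 ≤ -F z := by
  have hfc : Continuous f := hf.continuous
  have hfd : Differentiable ℝ f := hf.differentiable one_ne_zero
  have hfi : ∀ a b : ℝ, IntervalIntegrable f MeasureTheory.volume a b := fun a b =>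
    hfc.intervalIntegrable a b
  set d0 := deriv f 0 with hd0def
  set d1 := deriv f 1 with hd1def
  -- derivative of F
  have hF' : ∀ z : ℝ, HasDerivAt F (f z) z := by
    intro z
    have := (hfc.integral_hasStrictDerivAt 0 z).hasDerivAt
    have heq : F = fun u => ∫ r in (0:ℝ)..u, f r := funext hF
    rw [heq]; exact this
  have hFd : Differentiable ℝ F := fun z => (hF' z).differentiableAt
  have hFcont : Continuous F := hFd.continuous
  -- continuity of deriv f, choose δ
  have hdc : Continuous (deriv f) := hf.continuous_deriv le_rfl
  obtain ⟨δ0, hδ0pos, hδ0⟩ : ∃ δ > 0, ∀ s, |s - 1| ≤ δ → deriv f s ≤ d1 / 2 := by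
    have h : ContinuousAt (deriv f) 1 := hdc.continuousAt
    rw [Metric.continuousAt_iff] at h
    obtain ⟨δ, hδ, h⟩ := h (-d1 / 2) (by linarith)
    refine ⟨δ/2, by linarith, fun s hs => ?_⟩
    have := h (show dist s 1 < δ by rw [Real.dist_eq]; linarith [abs_nonneg (s-1)])
    rw [Real.dist_eq] at this
    have := abs_lt.mp this
    linarith [this.1, this.2]
  set δ := min δ0 (1/2) with hδdef
  have hδpos : 0 < δ := lt_min hδ0pos (by norm_num)
  have hδle : δ ≤ 1/2 := min_le_right _ _
  have hδ : ∀ s ∈ Icc (1 - δ) 1, deriv f s ≤ d1 / 2 := by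
    intro s hs
    apply hδ0
    rw [abs_le]
    constructor <;> [linarith [hs.1, min_le_left δ0 (1/2)]; linarith [hs.2, hδpos]]
  -- φ = f s + (d1/2)(1-s) is nonneg on [1-δ,1]
  have hφ : ∀ s ∈ Icc (1 - δ) 1, 0 ≤ f s + d1 / 2 * (1 - s) := by
    have hφ' : ∀ x : ℝ, HasDerivAt (fun s : ℝ => f s + d1 / 2 * (1 - s))
        (deriv f x + d1/2 * (-1)) x := fun x =>
      ((hfd x).hasDerivAt).add (((hasDerivAt_id x).const_sub 1).const_mul (d1/2))
    have hanti : AntitoneOn (fun s => f s + d1 / 2 * (1 - s)) (Icc (1 - δ) 1) := by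
      apply antitoneOn_of_deriv_nonpos (convex_Icc _ _)
      · exact (Differentiable.continuous fun x => (hφ' x).differentiableAt).continuousOn
      · exact fun x _ => (hφ' x).differentiableAt.differentiableWithinAt
      · intro x hx
        rw [interior_Icc] at hx
        rw [(hφ' x).deriv]
        have := hδ x ⟨le_of_lt hx.1, le_of_lt hx.2⟩
        linarith
    intro s hs
    have := hanti hs (right_mem_Icc.mpr (by linarith [hδpos])) hs.2
    simpa [hf1] using this
  -- G(z) = F 1 - F z - (-d1/4)(1-z)^2 nonneg on [1-δ,1]
  have hquad : ∀ z ∈ Icc (1 - δ) 1, (-d1/4) * (z - 1)^2 ≤ F 1 - F z := by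
    have hG' : ∀ x : ℝ, HasDerivAt (fun z => F 1 - F z - (-d1/4) * (1 - z)^2)
        (-(f x) - (-d1/4) * ((2:ℕ) * (1 - x)^(2-1) * (-1))) x := fun x =>
      ((hF' x).const_sub (F 1)).sub
        ((((hasDerivAt_id x).const_sub 1).pow 2).const_mul (-d1/4))
    have hanti : AntitoneOn (fun z => F 1 - F z - (-d1/4) * (1 - z)^2) (Icc (1 - δ) 1) := by
      apply antitoneOn_of_deriv_nonpos (convex_Icc _ _)
      · exact (Differentiable.continuous fun x => (hG' x).differentiableAt).continuousOn
      · exact fun x _ => (hG' x).differentiableAt.differentiableWithinAt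
      · intro x hx
        rw [interior_Icc] at hx
        rw [(hG' x).deriv]
        have := hφ x ⟨le_of_lt hx.1, le_of_lt hx.2⟩
        simp only [pow_one, Nat.cast_ofNat]
        nlinarith
    intro z hz
    have := hanti hz (right_mem_Icc.mpr (by linarith [hδpos])) hz.2
    simp only [sub_self] at this
    nlinarith [this]
  -- on [0, 1-δ], F 1 - F z attains positive min m
  have hFsub : ∀ z : ℝ, F 1 - F z = ∫ s in z..1, f s := by
    intro z
    rw [hF 1, hF z]
    exact integral_interval_sub_left (hfi 0 1) (hfi 0 z)
  have hGpos : ∀ z ∈ Icc (0:ℝ) (1 - δ), 0 < F 1 - F z := by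
    intro z hz
    rw [hFsub]
    rcases le_or_gt z α with hzα | hzα
    · have h1 : (∫ s in z..1, f s) = (∫ s in (0:ℝ)..1, f s) - ∫ s in (0:ℝ)..z, f s := by
        rw [integral_interval_sub_left (hfi 0 1) (hfi 0 z)]
      have h2 : (∫ s in (0:ℝ)..z, f s) ≤ 0 := by
        have : 0 ≤ ∫ s in (0:ℝ)..z, -(f s) := by
          apply integral_nonneg hz.1
          intro u hu
          rcases eq_or_lt_of_le hu.1 with h | h
          · simp [← h, hf0]
          · rcases eq_or_lt_of_le (le_trans hu.2 hzα) with h' | h'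
            · simp [h', hfα]
            · simp only [neg_nonneg]; exact le_of_lt (hneg u ⟨h, h'⟩)
        rw [intervalIntegral.integral_neg] at this
        linarith
      rw [h1]; linarith
    · apply intervalIntegral_pos_of_pos_on (hfi z 1)
      · intro x hx
        exact hpos x ⟨lt_trans hzα hx.1, hx.2⟩
      · linarith [hz.2, hδpos]
  obtain ⟨z₀, hz₀, hz₀min⟩ : ∃ z₀ ∈ Icc (0:ℝ) (1 - δ), ∀ z ∈ Icc (0:ℝ) (1 - δ),
      F 1 - F z₀ ≤ F 1 - F z := by
    obtain ⟨z₀, hz₀, hmin⟩ := (isCompact_Icc (a := (0:ℝ)) (b := 1 - δ)).exists_isMinOn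
      (nonempty_Icc.mpr (by linarith)) ((continuous_const.sub hFcont).continuousOn)
    exact ⟨z₀, hz₀, fun z hz => hmin hz⟩
  set m := F 1 - F z₀ with hmdef
  have hmpos : 0 < m := hGpos z₀ hz₀
  -- F 1 > 0
  have hF1pos : 0 < F 1 := by rw [hF 1]; exact hint
  -- explicit formulas outside [0,1]
  have hFneg : ∀ z ≤ (0:ℝ), F z = d0 * (z^2 / 2) := by
    intro z hz
    rw [hF z]
    have : (∫ r in (0:ℝ)..z, f r) = ∫ r in (0:ℝ)..z, d0 * r := by
      apply integral_congr
      intro s hs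
      rw [uIcc_of_ge hz] at hs
      rcases eq_or_lt_of_le hs.2 with h | h
      · simp [h, hf0]
      · exact hext0 s h
    rw [this, intervalIntegral.integral_const_mul, integral_id]
    ring
  have hFbig : ∀ z ≥ (1:ℝ), F z = F 1 + d1 * ((z-1)^2 / 2) := by
    intro z hz
    have h1 : F z - F 1 = ∫ s in (1:ℝ)..z, f s := by
      rw [hF z, hF 1]
      rw [integral_interval_sub_left (hfi 0 z) (hfi 0 1)]
    have h2 : (∫ s in (1:ℝ)..z, f s) = ∫ s in (1:ℝ)..z, d1 * (s - 1) := by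
      apply integral_congr
      intro s hs
      rw [uIcc_of_le hz] at hs
      rcases eq_or_lt_of_le hs.1 with h | h
      · simp [← h, hf1]
      · exact hext1 s h
    have h3 : (∫ s in (1:ℝ)..z, d1 * (s - 1)) = d1 * ((z-1)^2/2) := by
      rw [intervalIntegral.integral_const_mul,
        integral_comp_sub_right (fun x => x) 1, integral_id]
      norm_num
    rw [h2, h3] at h1
    linarith
  -- choose γ
  set γ := min (min m (-d1/4)) (min (min (F 1 / 2) (-d0/4)) (1/4)) with hγdef
  have hγpos : 0 < γ := by
    apply lt_min (lt_min hmpos (by linarith)) (lt_min (lt_min (by linarith) (by linarith))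
      (by norm_num))
  have hγm : γ ≤ m := le_trans (min_le_left _ _) (min_le_left _ _)
  have hγd1 : γ ≤ -d1/4 := le_trans (min_le_left _ _) (min_le_right _ _)
  have hγF1 : γ ≤ F 1 / 2 :=
    le_trans (min_le_right _ _) (le_trans (min_le_left _ _) (min_le_left _ _))
  have hγd0 : γ ≤ -d0/4 :=
    le_trans (min_le_right _ _) (le_trans (min_le_left _ _) (min_le_right _ _))
  have hγq : γ ≤ 1/4 := le_trans (min_le_right _ _) (min_le_right _ _)
  clear_value d0 d1 δ m γ
  refine ⟨γ, ⟨hγpos, by linarith⟩, fun z => ?_⟩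
  suffices h : γ * (z - 1) ^ 2 ≤ F 1 - F z by linarith
  rcases le_or_gt z 0 with hz | hz
  · rw [hFneg z hz]
    nlinarith [sq_nonneg z, sq_nonneg (z+1)]
  rcases le_or_gt z (1 - δ) with hz1 | hz1
  · have h1 := hz₀min z ⟨le_of_lt hz, hz1⟩
    have h2 : (z - 1)^2 ≤ 1 := by nlinarith
    nlinarith
  rcases le_or_gt z 1 with hz2 | hz2
  · have := hquad z ⟨le_of_lt hz1, hz2⟩
    nlinarith [sq_nonneg (z - 1)]
  · rw [hFbig z (le_of_lt hz2)]
    nlinarith [sq_nonneg (z - 1)]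
end

section
/- Let f be a bistable nonlinearity (as in the context) with antiderivative F(s) = ∫₀ˢ f(r) dr, and let q > 2 be a real number. Then there exist γ ∈ (0, 1/2) and C > 0 such that −F(z) ≥ γ z² − C|z|^q for all z ∈ ℝ. -/
set_option maxHeartbeats 1000000


/-- For the (extended) bistable nonlinearity `f` with antiderivative `F` and any `q > 2`,
there are `γ ∈ (0, 1/2)` and `C > 0` with `-F(z) ≥ γ z² - C |z|^q` for all `z`. -/
theorem stmt5 (f : ℝ → ℝ) (α : ℝ) (hf : ContDiff ℝ 1 f) (hα : α ∈ Set.Ioo (0:ℝ) 1)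
    (hf0 : f 0 = 0) (hfα : f α = 0) (hf1 : f 1 = 0)
    (hd0 : deriv f 0 < 0) (hdα : 0 < deriv f α) (hd1 : deriv f 1 < 0)
    (hneg : ∀ s ∈ Set.Ioo (0:ℝ) α, f s < 0) (hpos : ∀ s ∈ Set.Ioo α (1:ℝ), 0 < f s)
    (hint : 0 < ∫ s in (0:ℝ)..1, f s)
    (hext0 : ∀ s < (0:ℝ), f s = deriv f 0 * s)
    (hext1 : ∀ s > (1:ℝ), f s = deriv f 1 * (s - 1))
    (F : ℝ → ℝ) (hF : ∀ s : ℝ, F s = ∫ r in (0:ℝ)..s, f r)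
    (q : ℝ) (hq : 2 < q) :
    ∃ γ ∈ Set.Ioo (0:ℝ) (1/2), ∃ C > (0:ℝ),
      ∀ z : ℝ, γ * z ^ 2 - C * |z| ^ q ≤ -F z := by
  have hcf : Continuous f := hf.continuous
  have hcd : Continuous (deriv f) := hf.continuous_deriv le_rfl
  set a : ℝ := -deriv f 0 with ha_def
  have ha : 0 < a := by simp only [ha_def]; linarith
  -- δ from continuity of deriv f at 0
  obtain ⟨δ, hδpos, hδ⟩ := Metric.continuousAt_iff.mp hcd.continuousAt (a/2) (by linarith)
  set d : ℝ := δ/2 with hd_def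
  have hdpos : 0 < d := by positivity
  have hderiv_small : ∀ r ∈ Set.Icc (0:ℝ) d, deriv f r ≤ -(a/2) := by
    intro r hr
    have h1 : dist r 0 < δ := by
      rw [Real.dist_eq, sub_zero, abs_of_nonneg hr.1]
      have := hr.2; rw [hd_def] at this; linarith
    have h2 := hδ h1
    rw [Real.dist_eq] at h2
    have h3 := abs_lt.mp h2
    have : deriv f 0 = -a := by rw [ha_def]; ring
    linarith [h3.2]
  have hf_le : ∀ r ∈ Set.Icc (0:ℝ) d, f r ≤ -(a/2) * r := by
    intro r hr
    have hftc : ∫ t in (0:ℝ)..r, deriv f t = f r - f 0 :=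
      intervalIntegral.integral_deriv_eq_sub (fun x _ => hf.differentiable one_ne_zero x)
        (hcd.intervalIntegrable _ _)
    have hmono : ∫ t in (0:ℝ)..r, deriv f t ≤ ∫ t in (0:ℝ)..r, -(a/2) :=
      intervalIntegral.integral_mono_on hr.1 (hcd.intervalIntegrable _ _)
        intervalIntegrable_const
        (fun t ht => hderiv_small t ⟨ht.1, le_trans ht.2 hr.2⟩)
    rw [hftc, hf0, intervalIntegral.integral_const, smul_eq_mul] at hmono
    linarith
  have hFq : ∀ z ∈ Set.Icc (0:ℝ) d, F z ≤ -(a/4) * z^2 := by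
    intro z hz
    rw [hF]
    have hmono : ∫ r in (0:ℝ)..z, f r ≤ ∫ r in (0:ℝ)..z, -(a/2) * r :=
      intervalIntegral.integral_mono_on hz.1 (hcf.intervalIntegrable _ _)
        ((continuous_const.mul continuous_id).intervalIntegrable _ _)
        (fun t ht => hf_le t ⟨ht.1, le_trans ht.2 hz.2⟩)
    have hcomp : ∫ r in (0:ℝ)..z, -(a/2) * r = -(a/2) * ((z^2 - 0^2)/2) := by
      rw [intervalIntegral.integral_const_mul, integral_id]
    rw [hcomp] at hmono
    nlinarith
  -- exact formula for z ≤ 0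
  have hFneg : ∀ z ≤ (0:ℝ), F z = -(a/2) * z^2 := by
    intro z hz
    rw [hF]
    have hcongr : ∫ r in (0:ℝ)..z, f r = ∫ r in (0:ℝ)..z, deriv f 0 * r := by
      apply intervalIntegral.integral_congr
      intro r hr
      rw [Set.uIcc_of_ge hz] at hr
      rcases lt_or_eq_of_le hr.2 with h | h
      · exact hext0 r h
      · simp [h, hf0]
    rw [hcongr, intervalIntegral.integral_const_mul, integral_id]
    have hd0' : deriv f 0 = -a := by rw [ha_def]; ring
    rw [hd0']; ring
  -- global upper bound for F
  obtain ⟨B, hB⟩ := (isCompact_Icc (a := (0:ℝ)) (b := 1)).exists_bound_of_continuousOn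
    hcf.continuousOn
  have hB0 : 0 ≤ B := le_trans (norm_nonneg _) (hB 0 (by norm_num))
  have hF01 : ∀ z ∈ Set.Icc (0:ℝ) 1, F z ≤ B := by
    intro z hz
    rw [hF]
    have hmono : ∫ r in (0:ℝ)..z, f r ≤ ∫ r in (0:ℝ)..z, B :=
      intervalIntegral.integral_mono_on hz.1 (hcf.intervalIntegrable _ _)
        intervalIntegrable_const
        (fun t ht => le_trans (le_abs_self _)
          (hB t ⟨ht.1, le_trans ht.2 hz.2⟩))
    rw [intervalIntegral.integral_const, smul_eq_mul] at hmono
    nlinarith [hz.1, hz.2]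
  have hFB : ∀ z ≥ (0:ℝ), F z ≤ B := by
    intro z hz
    rcases le_or_gt z 1 with h1 | h1
    · exact hF01 z ⟨hz, h1⟩
    · have hsplit : (∫ r in (0:ℝ)..1, f r) + ∫ r in (1:ℝ)..z, f r = ∫ r in (0:ℝ)..z, f r :=
        intervalIntegral.integral_add_adjacent_intervals (hcf.intervalIntegrable _ _)
          (hcf.intervalIntegrable _ _)
      have h2 : ∫ r in (1:ℝ)..z, f r = deriv f 1 * ((z-1)^2/2) := by
        have hcongr : ∫ r in (1:ℝ)..z, f r = ∫ r in (1:ℝ)..z, deriv f 1 * (r - 1) := by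
          apply intervalIntegral.integral_congr
          intro r hr
          rw [Set.uIcc_of_le h1.le] at hr
          rcases eq_or_lt_of_le hr.1 with h | h
          · simp [← h, hf1]
          · exact hext1 r h
        rw [hcongr, intervalIntegral.integral_const_mul]
        congr 1
        have hsub : ∫ r in (1:ℝ)..z, (r - 1) =
            (∫ r in (1:ℝ)..z, r) - ∫ r in (1:ℝ)..z, (1:ℝ) :=
          intervalIntegral.integral_sub (continuous_id.intervalIntegrable _ _) intervalIntegrable_const
        rw [hsub, integral_id, intervalIntegral.integral_const, smul_eq_mul]
        ring
      have hFz : F z = F 1 + deriv f 1 * ((z-1)^2/2) := by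
        rw [hF z, hF 1, ← hsplit, h2]
      have hF1 : F 1 ≤ B := hF01 1 (by norm_num)
      nlinarith [sq_nonneg (z - 1)]
  -- choose γ and C
  set γ : ℝ := min (a/4) (1/4) with hγ_def
  have hγpos : 0 < γ := lt_min (by linarith) (by norm_num)
  have hγa : γ ≤ a/4 := min_le_left _ _
  have hγhalf : γ < 1/2 := lt_of_le_of_lt (min_le_right _ _) (by norm_num)
  have hdq : (0:ℝ) < d ^ (q-2) := Real.rpow_pos_of_pos hdpos _
  set C : ℝ := (γ + (B+1)/d^2) / d ^ (q-2) with hC_def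
  have hCpos : 0 < C := by
    apply div_pos _ hdq
    have : 0 < (B+1)/d^2 := by positivity
    linarith
  refine ⟨γ, ⟨hγpos, hγhalf⟩, C, hCpos, ?_⟩
  intro z
  have habsq : 0 ≤ |z| ^ q := Real.rpow_nonneg (abs_nonneg z) q
  rcases le_or_gt z 0 with hz0 | hz0
  · have := hFneg z hz0
    nlinarith [sq_nonneg z, mul_nonneg hCpos.le habsq]
  rcases le_or_gt z d with hzd | hzd
  · have := hFq z ⟨hz0.le, hzd⟩
    nlinarith [sq_nonneg z, mul_nonneg hCpos.le habsq]
  · -- z > d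
    have hzpos : 0 < z := lt_trans hdpos hzd
    have habs : |z| = z := abs_of_pos hzpos
    have hzq : z ^ q = z ^ (q-2) * z ^ 2 := by
      rw [show q = (q-2) + 2 by ring, Real.rpow_add hzpos,
        show ((q-2)+2) - 2 = q - 2 by ring,
        show (2:ℝ) = ((2:ℕ):ℝ) by norm_num, Real.rpow_natCast]
    have hpow_ge : d ^ (q-2) ≤ z ^ (q-2) :=
      Real.rpow_le_rpow hdpos.le hzd.le (by linarith)
    have hCd : C * d ^ (q-2) = γ + (B+1)/d^2 := by
      rw [hC_def, div_mul_cancel₀ _ (ne_of_gt hdq)]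
    have hCz : γ + (B+1)/d^2 ≤ C * z ^ (q-2) := by
      rw [← hCd]
      exact mul_le_mul_of_nonneg_left hpow_ge hCpos.le
    have hFzB : F z ≤ B := hFB z hzpos.le
    have hz2 : d^2 ≤ z^2 := by nlinarith
    have hkey : γ * z^2 + (B+1) ≤ C * z ^ q := by
      have h1 : (γ + (B+1)/d^2) * z^2 ≤ C * z ^ (q-2) * z^2 :=
        mul_le_mul_of_nonneg_right hCz (sq_nonneg z)
      have h2 : (B+1) ≤ (B+1)/d^2 * z^2 := by
        rw [div_mul_eq_mul_div, le_div_iff₀ (by positivity)]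
        nlinarith
      have h3 : C * z ^ q = C * z ^ (q-2) * z^2 := by rw [hzq]; ring
      rw [h3]
      nlinarith [h1, h2]
    rw [habs]
    linarith
end

section
/- Let N ≥ 1 and let f be a bistable nonlinearity (as in the context) with antiderivative F(s) = ∫₀ˢ f(r) dr, so that F(1) = ∫₀¹ f(s) ds > 0. Then there exists R₁ > 0 such that for every R ≥ R₁ there is a smooth function ψ : ℝᴺ → ℝ with 0 ≤ ψ ≤ 1, with support contained in the closed ball of radius R centered at the origin, and with ∫_{ℝᴺ} ( (1/2)‖∇ψ(x)‖² − F(ψ(x)) ) dx < 0. -/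
open MeasureTheory Metric Set Filter

set_option maxHeartbeats 1000000 in
/-- For the (extended) bistable nonlinearity `f` with antiderivative `F` (so `F(1) > 0`),
for every sufficiently large radius `R` there is a smooth function `ψ` with values in `[0,1]`,
supported in the closed ball of radius `R`, whose energy `∫ (½‖∇ψ‖² - F(ψ))` is negative. -/
theorem stmt6 (N : ℕ) (hN : 1 ≤ N)
    (f : ℝ → ℝ) (α : ℝ) (hf : ContDiff ℝ 1 f) (hα : α ∈ Set.Ioo (0:ℝ) 1)
    (hf0 : f 0 = 0) (hfα : f α = 0) (hf1 : f 1 = 0)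
    (hd0 : deriv f 0 < 0) (hdα : 0 < deriv f α) (hd1 : deriv f 1 < 0)
    (hneg : ∀ s ∈ Set.Ioo (0:ℝ) α, f s < 0) (hpos : ∀ s ∈ Set.Ioo α (1:ℝ), 0 < f s)
    (hint : 0 < ∫ s in (0:ℝ)..1, f s)
    (hext0 : ∀ s < (0:ℝ), f s = deriv f 0 * s)
    (hext1 : ∀ s > (1:ℝ), f s = deriv f 1 * (s - 1))
    (F : ℝ → ℝ) (hF : ∀ s : ℝ, F s = ∫ r in (0:ℝ)..s, f r) :
    ∃ R₁ > (0:ℝ), ∀ R ≥ R₁, ∃ ψ : EuclideanSpace ℝ (Fin N) → ℝ,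
      ContDiff ℝ (⊤ : ℕ∞) ψ ∧
      (∀ x, ψ x ∈ Set.Icc (0:ℝ) 1) ∧
      tsupport ψ ⊆ Metric.closedBall 0 R ∧
      (∫ x : EuclideanSpace ℝ (Fin N),
        ((1/2) * ‖gradient ψ x‖ ^ 2 - F (ψ x))) < 0 := by
  classical
  set E := EuclideanSpace ℝ (Fin N) with hE
  haveI : Nonempty (Fin N) := ⟨⟨0, hN⟩⟩
  haveI : Inhabited (Fin N) := ⟨⟨0, hN⟩⟩
  haveI : Nontrivial E := inferInstanceAs (Nontrivial (PiLp 2 fun _ : Fin N => ℝ))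
  -- Continuity facts about F
  have hfc : Continuous f := hf.continuous
  have hFc : Continuous F := by
    have := intervalIntegral.continuous_primitive (μ := volume)
      (fun a b => hfc.intervalIntegrable a b) 0
    exact this.congr fun s => (hF s).symm
  have hF0 : F 0 = 0 := by rw [hF 0, intervalIntegral.integral_same]
  have hF1pos : 0 < F 1 := by rw [hF 1]; exact hint
  obtain ⟨M, hM⟩ := (isCompact_Icc : IsCompact (Icc (0:ℝ) 1)).exists_bound_of_continuousOn
    hFc.continuousOn
  have hM0 : 0 ≤ M := le_trans (norm_nonneg (F 0)) (hM 0 ⟨le_rfl, zero_le_one⟩)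
  -- Bound on the derivative of the smooth transition function
  have hgderivc : Continuous (deriv Real.smoothTransition) :=
    (Real.smoothTransition.contDiff (n := ⊤)).continuous_deriv (by exact_mod_cast le_top)
  obtain ⟨C₀, hC₀⟩ := (isCompact_Icc : IsCompact (Icc (0:ℝ) 1)).exists_bound_of_continuousOn
    hgderivc.continuousOn
  set C : ℝ := max C₀ 0 with hCdef
  have hC0 : 0 ≤ C := le_max_right _ _
  have hCd : ∀ x : ℝ, ‖deriv Real.smoothTransition x‖ ≤ C := by
    intro x
    rcases lt_or_ge x 0 with hx | hx
    · have hev : Real.smoothTransition =ᶠ[nhds x] fun _ => (0:ℝ) :=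
        Filter.eventuallyEq_of_mem (Iio_mem_nhds hx)
          (fun y hy => Real.smoothTransition.zero_of_nonpos (le_of_lt hy))
      rw [hev.deriv_eq, deriv_const]
      simpa using hC0
    · rcases le_or_gt x 1 with hx1 | hx1
      · exact le_trans (hC₀ x ⟨hx, hx1⟩) (le_max_left _ _)
      · have hev : Real.smoothTransition =ᶠ[nhds x] fun _ => (1:ℝ) :=
          Filter.eventuallyEq_of_mem (Ioi_mem_nhds hx1)
            (fun y hy => Real.smoothTransition.one_of_one_le (le_of_lt hy))
        rw [hev.deriv_eq, deriv_const]
        simpa using hC0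
  have hglip : LipschitzWith C.toNNReal Real.smoothTransition := by
    apply lipschitzWith_of_nnnorm_deriv_le
      ((Real.smoothTransition.contDiff (n := ⊤)).differentiable (by simp))
    intro x
    rw [← NNReal.coe_le_coe, coe_nnnorm, Real.coe_toNNReal _ hC0]
    exact hCd x
  -- volume of the unit ball
  set κ : ℝ := (volume (ball (0:E) 1)).toReal with hκdef
  have hκ : 0 < κ :=
    ENNReal.toReal_pos (measure_ball_pos _ _ one_pos).ne' measure_ball_lt_top.ne
  set A : ℝ := 1/2 * C^2 + M with hAdef
  have hA0 : 0 ≤ A := by positivity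
  -- choose R₁ via a limit argument
  have h1 : Tendsto (fun r : ℝ => (r-1)/r) atTop (nhds 1) := by
    have heq : (fun r : ℝ => (r-1)/r) =ᶠ[atTop] fun r => 1 - 1/r := by
      filter_upwards [eventually_ne_atTop (0:ℝ)] with r hr
      field_simp
    rw [tendsto_congr' heq]
    simpa [one_div] using
      (tendsto_const_nhds (α := ℝ) (f := atTop) (x := (1:ℝ))).sub tendsto_inv_atTop_zero
  have htend : Tendsto (fun r : ℝ => A - A * ((r-1)/r)^N - F 1 * ((r-1)/r)^N) atTop
      (nhds (A - A * 1^N - F 1 * 1^N)) :=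
    (tendsto_const_nhds.sub ((h1.pow N).const_mul A)).sub ((h1.pow N).const_mul (F 1))
  have hev : ∀ᶠ r in atTop, A - A * ((r-1)/r)^N - F 1 * ((r-1)/r)^N < 0 :=
    htend.eventually_lt_const (by simp; linarith)
  obtain ⟨R₀, hR₀⟩ := Filter.eventually_atTop.mp (hev.and (eventually_ge_atTop (2:ℝ)))
  refine ⟨max R₀ 2, lt_of_lt_of_le two_pos (le_max_right _ _), fun R hR => ?_⟩
  obtain ⟨hbr, hR2⟩ := hR₀ R (le_trans (le_max_left _ _) hR)
  have hR0 : (0:ℝ) < R := by linarith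
  have hR0' : R ≠ 0 := hR0.ne'
  have hR1 : (1:ℝ) ≤ R - 1 := by linarith
  -- key numeric inequality
  have hkey : A * (R^N - (R-1)^N) < F 1 * (R-1)^N := by
    have hRN : (0:ℝ) < R^N := pow_pos hR0 N
    have h2 : A * R ^ N - A * (R-1)^N - F 1 * (R-1)^N < 0 := by
      calc A * R^N - A * (R-1)^N - F 1 * (R-1)^N
          = (A - A * ((R-1)/R)^N - F 1 * ((R-1)/R)^N) * R^N := by
            rw [div_pow]; field_simp
        _ < 0 := mul_neg_of_neg_of_pos hbr hRN
    linarith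
  -- the test function
  set ψ : E → ℝ := fun x => Real.smoothTransition (R - ‖x‖) with hψdef
  have hψ1 : ∀ x : E, ‖x‖ < R - 1 → ψ x = 1 := fun x hx =>
    Real.smoothTransition.one_of_one_le (by linarith)
  have hψev1 : ∀ x : E, ‖x‖ < R - 1 → ψ =ᶠ[nhds x] fun _ => (1:ℝ) := by
    intro x hx
    filter_upwards [(isOpen_lt continuous_norm continuous_const).mem_nhds
      (show ‖x‖ < R - 1 from hx)] with y hy
    exact hψ1 y hy
  have hψev0 : ∀ x : E, R < ‖x‖ → ψ =ᶠ[nhds x] fun _ => (0:ℝ) := by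
    intro x hx
    filter_upwards [(isOpen_lt continuous_const continuous_norm).mem_nhds
      (show R < ‖x‖ from hx)] with y hy
    exact Real.smoothTransition.zero_of_nonpos (by linarith)
  have hsmooth : ContDiff ℝ (⊤ : ℕ∞) ψ := by
    rw [contDiff_iff_contDiffAt]
    intro x
    rcases lt_or_ge ‖x‖ (R-1) with hx | hx
    · exact contDiffAt_const.congr_of_eventuallyEq (hψev1 x hx)
    · have hx0 : x ≠ 0 := by
        intro h; rw [h, norm_zero] at hx; linarith
      exact Real.smoothTransition.contDiffAt.comp x
        (contDiffAt_const.sub (contDiffAt_norm ℝ hx0))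
  have hrange : ∀ x, ψ x ∈ Set.Icc (0:ℝ) 1 := fun x =>
    ⟨Real.smoothTransition.nonneg _, Real.smoothTransition.le_one _⟩
  have hsupp : tsupport ψ ⊆ closedBall (0:E) R := by
    apply closure_minimal _ isClosed_closedBall
    intro x hx
    rw [Function.mem_support] at hx
    rw [mem_closedBall_zero_iff]
    by_contra hxR
    exact hx (Real.smoothTransition.zero_of_nonpos (by push_neg at hxR; linarith))
  -- gradient facts
  have hgradnorm : ∀ x, ‖gradient ψ x‖ = ‖fderiv ℝ ψ x‖ := fun x =>
    (InnerProductSpace.toDual ℝ E).symm.norm_map _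
  have hlip1 : LipschitzWith 1 (fun y : E => R - ‖y‖) := by
    apply LipschitzWith.of_dist_le_mul
    intro x y
    rw [Real.dist_eq, dist_eq_norm, NNReal.coe_one, one_mul]
    calc |R - ‖x‖ - (R - ‖y‖)| = |‖x‖ - ‖y‖| := by
          rw [abs_sub_comm]; congr 1; ring
      _ ≤ ‖x - y‖ := abs_norm_sub_norm_le x y
  have hlipψ : LipschitzWith (C.toNNReal * 1) ψ := hglip.comp hlip1
  have hgradle : ∀ x, ‖gradient ψ x‖ ≤ C := by
    intro x
    rw [hgradnorm]
    have := norm_fderiv_le_of_lipschitz ℝ hlipψ (x₀ := x)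
    simpa [Real.coe_toNNReal _ hC0] using this
  have hgrad0in : ∀ x : E, ‖x‖ < R - 1 → gradient ψ x = 0 := by
    intro x hx
    show (InnerProductSpace.toDual ℝ E).symm (fderiv ℝ ψ x) = 0
    rw [(hψev1 x hx).fderiv_eq, fderiv_fun_const]
    simp
  have hgrad0out : ∀ x : E, R < ‖x‖ → gradient ψ x = 0 := by
    intro x hx
    show (InnerProductSpace.toDual ℝ E).symm (fderiv ℝ ψ x) = 0
    rw [(hψev0 x hx).fderiv_eq, fderiv_fun_const]
    simp
  -- the energy integrand
  set h : E → ℝ := fun x => (1/2) * ‖gradient ψ x‖ ^ 2 - F (ψ x) with hhdef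
  have hgradcont : Continuous (gradient ψ) := by
    have hc : Continuous (fderiv ℝ ψ) := hsmooth.continuous_fderiv (by simp)
    exact (InnerProductSpace.toDual ℝ E).symm.continuous.comp hc
  have hhcont : Continuous h :=
    (continuous_const.mul ((hgradcont.norm).pow 2)).sub (hFc.comp hsmooth.continuous)
  have hhsupp : ∀ x : E, x ∉ closedBall (0:E) R → h x = 0 := by
    intro x hx
    rw [mem_closedBall_zero_iff] at hx
    push_neg at hx
    have hψ0 : ψ x = 0 := Real.smoothTransition.zero_of_nonpos (by linarith)
    simp [hhdef, hgrad0out x hx, hψ0, hF0]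
  have hhint : Integrable h :=
    hhcont.integrable_of_hasCompactSupport
      (HasCompactSupport.intro (isCompact_closedBall (0:E) R) hhsupp)
  -- split the integral
  have hsub : ball (0:E) (R-1) ⊆ closedBall (0:E) R :=
    ball_subset_closedBall.trans (closedBall_subset_closedBall (by linarith))
  have e1 : ∫ x : E, h x = ∫ x in closedBall (0:E) R, h x :=
    (setIntegral_eq_integral_of_forall_compl_eq_zero hhsupp).symm
  have e2 : ∫ x in closedBall (0:E) R, h x
      = (∫ x in ball (0:E) (R-1), h x)
        + ∫ x in closedBall (0:E) R \ ball (0:E) (R-1), h x := by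
    rw [← setIntegral_union disjoint_sdiff_right
      (measurableSet_closedBall.diff measurableSet_ball)
      hhint.integrableOn hhint.integrableOn, Set.union_diff_cancel hsub]
  have e3 : ∫ x in ball (0:E) (R-1), h x
      = -(F 1) * (volume (ball (0:E) (R-1))).toReal := by
    rw [setIntegral_congr_fun measurableSet_ball (g := fun _ => -(F 1)) ?_,
      setIntegral_const, smul_eq_mul, mul_comm]
    · rfl
    intro x hx
    rw [mem_ball_zero_iff] at hx
    simp [hhdef, hgrad0in x hx, hψ1 x hx]
  have hfin : volume (closedBall (0:E) R \ ball (0:E) (R-1)) < ⊤ :=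
    lt_of_le_of_lt (measure_mono diff_subset) measure_closedBall_lt_top
  have e4 : ∫ x in closedBall (0:E) R \ ball (0:E) (R-1), h x
      ≤ A * (volume (closedBall (0:E) R \ ball (0:E) (R-1))).toReal := by
    refine le_trans (le_abs_self _) ?_
    rw [← Real.norm_eq_abs]
    refine norm_setIntegral_le_of_norm_le_const hfin ?_
    intro x _
    have h1' : ‖gradient ψ x‖ ^ 2 ≤ C ^ 2 := by
      have := hgradle x
      nlinarith [norm_nonneg (gradient ψ x)]
    have h2' : |F (ψ x)| ≤ M := hM _ (hrange x)
    rw [Real.norm_eq_abs]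
    calc |(1/2) * ‖gradient ψ x‖ ^ 2 - F (ψ x)|
        ≤ |(1/2) * ‖gradient ψ x‖ ^ 2| + |F (ψ x)| := abs_sub _ _
      _ ≤ 1/2 * C^2 + M := by
          rw [abs_of_nonneg (by positivity : (0:ℝ) ≤ (1/2) * ‖gradient ψ x‖ ^ 2)]
          linarith [h1', h2']
  -- compute the volumes
  have hvb : (volume (ball (0:E) (R-1))).toReal = (R-1)^N * κ := by
    rw [Measure.addHaar_ball volume (0:E) (by linarith : (0:ℝ) ≤ R-1),
      finrank_euclideanSpace_fin, ENNReal.toReal_mul,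
      ENNReal.toReal_ofReal (by positivity)]
  have hvcb : (volume (closedBall (0:E) R)).toReal = R^N * κ := by
    rw [Measure.addHaar_closedBall volume (0:E) hR0.le,
      finrank_euclideanSpace_fin, ENNReal.toReal_mul,
      ENNReal.toReal_ofReal (by positivity)]
  have hvann : (volume (closedBall (0:E) R \ ball (0:E) (R-1))).toReal
      = R^N * κ - (R-1)^N * κ := by
    rw [measure_diff hsub measurableSet_ball.nullMeasurableSet measure_ball_lt_top.ne,
      ENNReal.toReal_sub_of_le (measure_mono hsub) measure_closedBall_lt_top.ne,
      hvcb, hvb]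
  refine ⟨ψ, hsmooth, hrange, hsupp, ?_⟩
  have : (∫ x : E, ((1/2) * ‖gradient ψ x‖ ^ 2 - F (ψ x))) = ∫ x : E, h x := rfl
  rw [this, e1, e2]
  have hfinal : -(F 1) * ((R-1)^N * κ) + A * (R^N * κ - (R-1)^N * κ) < 0 := by
    nlinarith [mul_lt_mul_of_pos_right hkey hκ]
  calc (∫ x in ball (0:E) (R-1), h x)
        + ∫ x in closedBall (0:E) R \ ball (0:E) (R-1), h x
      ≤ -(F 1) * ((R-1)^N * κ) + A * (R^N * κ - (R-1)^N * κ) := by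
        rw [e3, hvb]
        exact add_le_add le_rfl (le_trans e4 (by rw [hvann]))
    _ < 0 := hfinal
end

section
/- Let N ≥ 1 and let w : ℝᴺ → ℝ be twice continuously differentiable on a neighborhood of a point x*. Suppose w(x*) = 0, the gradient of w at x* is zero, and Δw(x*) > 0, where Δw = ∑ᵢ ∂²w/∂xᵢ². Then x* is NOT a Lebesgue density point of the set S = {x : w(x) = 0}; that is, it is not the case that |S ∩ B(x*, r)| / |B(x*, r)| → 1 as r → 0⁺. -/
open MeasureTheory Filter

/-- The Laplacian `∑ i ∂²w/∂xᵢ²` of a function on `ℝᴺ`. -/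
noncomputable def lap {N : ℕ} (w : EuclideanSpace ℝ (Fin N) → ℝ)
    (x : EuclideanSpace ℝ (Fin N)) : ℝ :=
  ∑ i : Fin N,
    fderiv ℝ (fun y => fderiv ℝ w y (EuclideanSpace.single i 1)) x (EuclideanSpace.single i 1)

set_option maxHeartbeats 1000000 in
private lemma stmt9_key {N : ℕ} (w : EuclideanSpace ℝ (Fin N) → ℝ)
    (f : EuclideanSpace ℝ (Fin N) → EuclideanSpace ℝ (Fin N) →L[ℝ] ℝ)
    (F : EuclideanSpace ℝ (Fin N) → EuclideanSpace ℝ (Fin N) →L[ℝ] EuclideanSpace ℝ (Fin N) →L[ℝ] ℝ)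
    (x₀ e : EuclideanSpace ℝ (Fin N)) (he : ‖e‖ = 1) (ρ c M δ : ℝ)
    (hρ : 0 < ρ) (hc : 0 < c) (hM0 : 0 < M)
    (hδ0 : 0 < δ) (hδ14 : δ ≤ 1/4) (hMδ : M * δ ≤ c/32)
    (hdw : ∀ y ∈ Metric.ball x₀ ρ, HasFDerivAt w (f y) y)
    (hdf : ∀ y ∈ Metric.ball x₀ ρ, HasFDerivAt f (F y) y)
    (hFlow : ∀ y ∈ Metric.ball x₀ ρ, c / 2 ≤ F y e e)
    (hfbd : ∀ a ∈ Metric.ball x₀ ρ, ‖f a‖ ≤ M * ‖a - x₀‖)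
    (hwquad : ∀ a, ‖a - x₀‖ < ρ → |w a| ≤ M * ‖a - x₀‖ ^ 2)
    (r : ℝ) (hr : 0 < r) (hrρ : r < ρ) :
    ∀ x ∈ Metric.ball (x₀ + (r/2) • e) (δ * r), 0 < w x := by
  intro x hx
  have hδr : δ * r ≤ r / 4 := by nlinarith [hδ14, hr.le, hδ0.le]
  set t := r / 2 with htdef
  have htpos : 0 < t := by rw [htdef]; positivity
  clear_value t
  set a := x - t • e with hadef
  set u := a - x₀ with hudef
  clear_value a u
  have hxa : x = a + t • e := by rw [hadef]; abel
  have hun : ‖u‖ < δ * r := by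
    have h1 : x - (x₀ + t • e) = u := by rw [hudef, hadef]; abel
    have h2 := Metric.mem_ball.1 hx
    rwa [dist_eq_norm, h1] at h2
  have hu2t : ‖u‖ ≤ 2 * δ * t := by
    have h3 : δ * r = 2 * δ * t := by rw [htdef]; ring
    linarith [hun]
  have huρ : ‖u‖ < ρ := by
    have : t = r / 2 := htdef
    linarith [hun, hδr]
  have hmem : ∀ s ∈ Set.Icc (0:ℝ) t, a + s • e ∈ Metric.ball x₀ ρ := by
    intro s hs
    have h1 : a + s • e - x₀ = u + s • e := by rw [hudef]; abel
    rw [Metric.mem_ball, dist_eq_norm, h1]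
    have h2 : ‖u + s • e‖ ≤ ‖u‖ + ‖s • e‖ := norm_add_le _ _
    have h3 : ‖s • e‖ = s := by
      rw [norm_smul, he, mul_one, Real.norm_eq_abs, abs_of_nonneg hs.1]
    have h4 := hs.2
    have h5 : t = r / 2 := htdef
    calc ‖u + s • e‖ ≤ ‖u‖ + ‖s • e‖ := h2
      _ = ‖u‖ + s := by rw [h3]
      _ < ρ := by linarith [hun, hδr]
  have haB : a ∈ Metric.ball x₀ ρ := by
    have h := hmem 0 ⟨le_rfl, htpos.le⟩
    simpa using h
  -- curve derivative
  have hcurve : ∀ s : ℝ, HasDerivAt (fun s : ℝ => a + s • e) e s := by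
    intro s
    simpa using ((hasDerivAt_id s).smul_const e).const_add a
  -- derivatives along the line
  set ψ := fun s : ℝ => f (a + s • e) e with hψdef
  set φ := fun s : ℝ => w (a + s • e) with hφdef
  clear_value ψ φ
  have hφd : ∀ s ∈ Set.Icc (0:ℝ) t, HasDerivAt φ (ψ s) s := by
    intro s hs
    simp only [hφdef, hψdef]
    have h := (hdw _ (hmem s hs)).comp_hasDerivAt_of_eq s (hcurve s) rfl
    simpa [Function.comp_def] using h
  have hψd : ∀ s ∈ Set.Icc (0:ℝ) t, HasDerivAt ψ (F (a + s • e) e e) s := by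
    intro s hs
    have h1 : HasDerivAt (fun s : ℝ => f (a + s • e)) (F (a + s • e) e) s := by
      have h := (hdf _ (hmem s hs)).comp_hasDerivAt_of_eq s (hcurve s) rfl
      simpa [Function.comp_def] using h
    have h2 := ((ContinuousLinearMap.apply ℝ ℝ e).hasFDerivAt
      (x := f (a + s • e))).comp_hasDerivAt_of_eq s h1 rfl
    simpa [hψdef, Function.comp_def] using h2
  -- ψ grows at least linearly
  have hψgrow : ∀ s ∈ Set.Icc (0:ℝ) t, ψ 0 + (c/2) * s ≤ ψ s := by
    have hg : ∀ s ∈ Set.Icc (0:ℝ) t,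
        HasDerivAt (fun s => ψ s - (c/2) * s) (F (a + s • e) e e - c/2) s := by
      intro s hs
      exact (hψd s hs).sub (by simpa using (hasDerivAt_id s).const_mul (c/2))
    have hmono : MonotoneOn (fun s => ψ s - (c/2) * s) (Set.Icc 0 t) := by
      apply monotoneOn_of_deriv_nonneg (convex_Icc 0 t)
      · exact fun s hs => ((hg s hs).continuousAt).continuousWithinAt
      · intro s hs
        rw [interior_Icc] at hs
        exact ((hg s ⟨hs.1.le, hs.2.le⟩).differentiableAt).differentiableWithinAt
      · intro s hs
        rw [interior_Icc] at hs
        rw [(hg s ⟨hs.1.le, hs.2.le⟩).deriv]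
        have h := hFlow _ (hmem s ⟨hs.1.le, hs.2.le⟩)
        linarith
    intro s hs
    have h := hmono ⟨le_rfl, htpos.le⟩ hs hs.1
    simp only [mul_zero, sub_zero] at h
    linarith
  -- integrate once more
  have hχmono : MonotoneOn (fun s => φ s - ψ 0 * s - (c/8) * s^2) (Set.Icc 0 t) := by
    have hχd : ∀ s ∈ Set.Icc (0:ℝ) t,
        HasDerivAt (fun s => φ s - ψ 0 * s - (c/8) * s^2) (ψ s - ψ 0 - (c/8) * (2*s)) s := by
      intro s hs
      have h1 : HasDerivAt (fun s : ℝ => ψ 0 * s) (ψ 0) s := by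
        simpa using (hasDerivAt_id s).const_mul (ψ 0)
      have h2 : HasDerivAt (fun s : ℝ => (c/8) * s^2) ((c/8) * (2*s)) s := by
        have h := (hasDerivAt_pow 2 s).const_mul (c/8)
        simpa using h
      exact ((hφd s hs).sub h1).sub h2
    apply monotoneOn_of_deriv_nonneg (convex_Icc 0 t)
    · exact fun s hs => ((hχd s hs).continuousAt).continuousWithinAt
    · intro s hs
      rw [interior_Icc] at hs
      exact ((hχd s ⟨hs.1.le, hs.2.le⟩).differentiableAt).differentiableWithinAt
    · intro s hs
      rw [interior_Icc] at hs
      rw [(hχd s ⟨hs.1.le, hs.2.le⟩).deriv]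
      have h := hψgrow s ⟨hs.1.le, hs.2.le⟩
      have h5 := mul_nonneg hc.le hs.1.le
      linarith
  -- collect the estimates
  have hφ0 : φ 0 = w a := by simp [hφdef]
  have hφt : φ t = w x := by
    simp only [hφdef]
    rw [hxa]
  have hψ0 : |ψ 0| ≤ M * ‖u‖ := by
    have h1 : ‖f a e‖ ≤ ‖f a‖ * ‖e‖ := (f a).le_opNorm e
    rw [he, mul_one] at h1
    have h2 : ‖f a‖ ≤ M * ‖u‖ := by rw [hudef]; exact hfbd a haB
    have h3 : ψ 0 = f a e := by simp [hψdef]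
    rw [h3, ← Real.norm_eq_abs]
    exact h1.trans h2
  have hwa : |w a| ≤ M * ‖u‖ ^ 2 := by
    have h := hwquad a (by rw [← hudef]; exact huρ)
    rwa [← hudef] at h
  have hineq : w a + ψ 0 * t + (c/8) * t^2 ≤ w x := by
    have h := hχmono (Set.mem_Icc.2 ⟨le_rfl, htpos.le⟩) (Set.mem_Icc.2 ⟨htpos.le, le_rfl⟩)
      htpos.le
    norm_num at h
    rw [hφ0, hφt] at h
    linarith
  have harith : ∀ nu wa ps wx : ℝ, 0 ≤ nu → nu ≤ 2 * δ * t →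
      -(M * nu ^ 2) ≤ wa → -(M * nu) ≤ ps →
      wa + ps * t + (c/8) * t^2 ≤ wx → 0 < wx := by
    intro nu wa ps wx h1 h2 h3 h4 h5
    have hMu : M * nu ≤ (c/16) * t := by
      nlinarith [mul_le_mul_of_nonneg_left h2 hM0.le,
        mul_le_mul_of_nonneg_left hMδ htpos.le]
    have hut : nu ≤ t/2 := by nlinarith [hδ14, htpos.le, hδ0.le]
    have hp : M * nu * nu ≤ ((c/16) * t) * (t/2) :=
      mul_le_mul hMu hut h1 (by positivity)
    have hMut : (-(M * nu)) * t ≤ ps * t :=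
      mul_le_mul_of_nonneg_right h4 htpos.le
    nlinarith [h5, h3, hp, hMut, mul_pos htpos htpos, hc,
      mul_le_mul_of_nonneg_right hMu htpos.le]
  exact harith ‖u‖ (w a) (ψ 0) (w x) (norm_nonneg u) hu2t
    (abs_le.1 hwa).1 (abs_le.1 hψ0).1 hineq


set_option maxHeartbeats 1000000 in
/-- If `w` is `C²` near `x₀`, vanishes together with its gradient at `x₀`, and has strictly
positive Laplacian there, then `x₀` is not a Lebesgue density point of the zero set of `w`. -/
theorem stmt9 (N : ℕ) (hN : 1 ≤ N) (w : EuclideanSpace ℝ (Fin N) → ℝ)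
    (x₀ : EuclideanSpace ℝ (Fin N))
    (hw : ∃ U ∈ nhds x₀, ContDiffOn ℝ 2 w U)
    (h0 : w x₀ = 0) (hgrad : fderiv ℝ w x₀ = 0) (hlap : 0 < lap w x₀) :
    ¬ Tendsto
      (fun r : ℝ =>
        volume ({x | w x = 0} ∩ Metric.ball x₀ r) / volume (Metric.ball x₀ r))
      (nhdsWithin 0 (Set.Ioi 0)) (nhds 1) := by
  classical
  intro hT
  obtain ⟨U, hU, hwU⟩ := hw
  obtain ⟨ε₀, hε₀, hballU⟩ := Metric.mem_nhds_iff.1 hU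
  set B₀ := Metric.ball x₀ ε₀ with hB₀def
  have hB₀o : IsOpen B₀ := Metric.isOpen_ball
  have hx₀B : x₀ ∈ B₀ := Metric.mem_ball_self hε₀
  have hw2 : ContDiffOn ℝ 2 w B₀ := hwU.mono hballU
  set f := fderiv ℝ w with hfdef
  set F := fderiv ℝ f with hFdef
  -- basic differentiability facts
  have hdw : ∀ y ∈ B₀, HasFDerivAt w (f y) y := fun y hy =>
    ((hw2.differentiableOn (by norm_num)).differentiableAt (hB₀o.mem_nhds hy)).hasFDerivAt
  have hf1 : ContDiffOn ℝ 1 f B₀ := hw2.fderiv_of_isOpen hB₀o (by norm_num)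
  have hdf : ∀ y ∈ B₀, HasFDerivAt f (F y) y := fun y hy =>
    ((hf1.differentiableOn (by norm_num)).differentiableAt (hB₀o.mem_nhds hy)).hasFDerivAt
  have hFc : ContinuousOn F B₀ := hf1.continuousOn_fderiv_of_isOpen hB₀o le_rfl
  -- rewrite the Laplacian in terms of `F`
  have hfd0 : ∀ v : EuclideanSpace ℝ (Fin N),
      fderiv ℝ (fun y => fderiv ℝ w y v) x₀ =
        (ContinuousLinearMap.apply ℝ ℝ v).comp (F x₀) := by
    intro v
    have h := ((ContinuousLinearMap.apply ℝ ℝ v).hasFDerivAt (x := f x₀)).comp x₀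
      (hdf x₀ hx₀B)
    exact h.fderiv
  have hlapF : lap w x₀ = ∑ i : Fin N,
      F x₀ (EuclideanSpace.single i 1) (EuclideanSpace.single i 1) := by
    unfold lap
    refine Finset.sum_congr rfl fun i _ => ?_
    rw [hfd0 (EuclideanSpace.single i 1)]
    rfl
  -- choose a good direction
  obtain ⟨i, hi⟩ : ∃ i : Fin N,
      0 < F x₀ (EuclideanSpace.single i 1) (EuclideanSpace.single i 1) := by
    by_contra h
    push_neg at h
    have : lap w x₀ ≤ 0 := by
      rw [hlapF]; exact Finset.sum_nonpos fun i _ => h i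
    linarith
  set e := EuclideanSpace.single (𝕜 := ℝ) i (1 : ℝ) with hedef
  have he : ‖e‖ = 1 := by simp [hedef, EuclideanSpace.norm_single]
  set c := F x₀ e e with hcdef
  have hc : 0 < c := hi
  clear_value c
  set M := ‖F x₀‖ + c with hMdef
  have hM0 : 0 < M := by rw [hMdef]; positivity
  clear_value M
  -- bound on bilinear evaluation
  have habs : ∀ L : EuclideanSpace ℝ (Fin N) →L[ℝ] EuclideanSpace ℝ (Fin N) →L[ℝ] ℝ,
      |L e e| ≤ ‖L‖ := by
    intro L
    have h1 : ‖L e e‖ ≤ ‖L e‖ * ‖e‖ := (L e).le_opNorm e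
    have h2 : ‖L e‖ ≤ ‖L‖ * ‖e‖ := L.le_opNorm e
    rw [he, mul_one] at h1 h2
    calc |L e e| = ‖L e e‖ := (Real.norm_eq_abs _).symm
      _ ≤ ‖L e‖ := h1
      _ ≤ ‖L‖ := h2
  -- find a small ball on which the second derivative is controlled
  have hFcx : ContinuousAt F x₀ := hFc.continuousAt (hB₀o.mem_nhds hx₀B)
  obtain ⟨ρ₁, hρ₁, hρbd⟩ := (Metric.continuousAt_iff (f := F) (a := x₀)).1 hFcx (c / 2) (by positivity)
  set ρ := min ρ₁ ε₀ with hρdef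
  have hρ : 0 < ρ := lt_min hρ₁ hε₀
  have hρsub : Metric.ball x₀ ρ ⊆ B₀ := Metric.ball_subset_ball (min_le_right _ _)
  have hFnear : ∀ y ∈ Metric.ball x₀ ρ, ‖F y - F x₀‖ ≤ c / 2 := by
    intro y hy
    have h1 : dist y x₀ < ρ₁ := lt_of_lt_of_le (Metric.mem_ball.1 hy) (min_le_left _ _)
    have h2 := hρbd h1
    rw [dist_eq_norm (F y) (F x₀)] at h2
    exact h2.le
  clear_value ρ
  have hFbd : ∀ y ∈ Metric.ball x₀ ρ, ‖F y‖ ≤ M := by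
    intro y hy
    have h1 : ‖F y‖ = ‖F x₀ + (F y - F x₀)‖ := by rw [add_sub_cancel]
    calc ‖F y‖ = ‖F x₀ + (F y - F x₀)‖ := h1
      _ ≤ ‖F x₀‖ + ‖F y - F x₀‖ := norm_add_le (F x₀) (F y - F x₀)
      _ ≤ ‖F x₀‖ + c / 2 := by linarith [hFnear y hy]
      _ ≤ M := by rw [hMdef]; linarith
  have hFlow : ∀ y ∈ Metric.ball x₀ ρ, c / 2 ≤ F y e e := by
    intro y hy
    have h1 : |(F y - F x₀) e e| ≤ ‖F y - F x₀‖ := habs _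
    have h2 : (F y - F x₀) e e = F y e e - c := by
      simp [hcdef, ContinuousLinearMap.sub_apply]
    have h3 := hFnear y hy
    rw [h2] at h1
    have h4 := (abs_le.1 h1).1
    linarith
  -- Lipschitz bound for the gradient
  have hlip : ∀ y ∈ Metric.ball x₀ ρ, ∀ z ∈ Metric.ball x₀ ρ,
      ‖f y - f z‖ ≤ M * ‖y - z‖ := by
    intro y hy z hz
    exact (convex_ball x₀ ρ).norm_image_sub_le_of_norm_fderiv_le
      (fun u hu => (hdf u (hρsub hu)).differentiableAt)
      (fun u hu => hFbd u hu) hz hy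
  have hfbd : ∀ a ∈ Metric.ball x₀ ρ, ‖f a‖ ≤ M * ‖a - x₀‖ := by
    intro a ha
    have h1 := hlip a ha x₀ (Metric.mem_ball_self hρ)
    rwa [hgrad, sub_zero] at h1
  -- second-order Taylor bound for w at x₀
  have hwquad : ∀ a, ‖a - x₀‖ < ρ → |w a| ≤ M * ‖a - x₀‖ ^ 2 := by
    intro a ha
    have hsub : Metric.closedBall x₀ ‖a - x₀‖ ⊆ Metric.ball x₀ ρ :=
      Metric.closedBall_subset_ball ha
    have hbd : ∀ u ∈ Metric.closedBall x₀ ‖a - x₀‖, ‖fderiv ℝ w u‖ ≤ M * ‖a - x₀‖ := by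
      intro u hu
      have h1 : ‖f u‖ ≤ M * ‖u - x₀‖ := hfbd u (hsub hu)
      have h2 : ‖u - x₀‖ ≤ ‖a - x₀‖ := by
        rw [← dist_eq_norm, ← dist_eq_norm]; exact Metric.mem_closedBall.1 hu
      calc ‖fderiv ℝ w u‖ = ‖f u‖ := rfl
        _ ≤ M * ‖u - x₀‖ := h1
        _ ≤ M * ‖a - x₀‖ := mul_le_mul_of_nonneg_left h2 hM0.le
    have h := (convex_closedBall x₀ ‖a - x₀‖).norm_image_sub_le_of_norm_fderiv_le
      (fun u hu => (hdw u (hρsub (hsub hu))).differentiableAt) hbd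
      (Metric.mem_closedBall_self (norm_nonneg _))
      (show a ∈ Metric.closedBall x₀ ‖a - x₀‖ by simp [Metric.mem_closedBall, dist_eq_norm])
    rw [h0, sub_zero, Real.norm_eq_abs] at h
    calc |w a| ≤ M * ‖a - x₀‖ * ‖a - x₀‖ := h
      _ = M * ‖a - x₀‖ ^ 2 := by ring
  -- choose the cone aperture
  set δ := min (1/4 : ℝ) (c / (32 * M)) with hδdef
  have hδ0 : 0 < δ := lt_min (by norm_num) (by positivity)
  have hδ14 : δ ≤ 1/4 := min_le_left _ _
  have hMδ : M * δ ≤ c / 32 := by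
    have h : δ ≤ c / (32 * M) := by rw [hδdef]; exact min_le_right _ _
    calc M * δ ≤ M * (c / (32 * M)) := by nlinarith
      _ = c / 32 := by field_simp
  clear_value δ
  -- the key pointwise positivity claim
  have key : ∀ r : ℝ, 0 < r → r < ρ →
      ∀ x ∈ Metric.ball (x₀ + (r/2) • e) (δ * r), 0 < w x := by
    intro r hr hrρ
    exact stmt9_key w f F x₀ e he ρ c M δ hρ hc hM0 hδ0 hδ14 hMδ
      (fun y hy => hdw y (hρsub hy)) (fun y hy => hdf y (hρsub hy))
      hFlow hfbd hwquad r hr hrρ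
  -- measure-theoretic conclusion
  haveI : Nontrivial (EuclideanSpace ℝ (Fin N)) := by
    refine ⟨0, EuclideanSpace.single ⟨0, hN⟩ (1:ℝ), fun h => ?_⟩
    have h2 := congrArg norm h
    simp [EuclideanSpace.norm_single] at h2
  set η := ENNReal.ofReal (δ ^ N) with hηdef
  have hη0 : η ≠ 0 := by
    simp only [hηdef, ne_eq, ENNReal.ofReal_eq_zero, not_le]
    positivity
  have hη1 : (1:ENNReal) - η < 1 :=
    ENNReal.sub_lt_self ENNReal.one_ne_top one_ne_zero hη0
  set κ := volume (Metric.ball (0 : EuclideanSpace ℝ (Fin N)) 1) with hκdef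
  have hκ0 : κ ≠ 0 := (Metric.measure_ball_pos volume 0 one_pos).ne'
  have hκtop : κ ≠ ⊤ := measure_ball_lt_top.ne
  -- the ratio is bounded away from 1 for small r
  have hbound : ∀ r : ℝ, 0 < r → r < ρ →
      volume ({x | w x = 0} ∩ Metric.ball x₀ r) / volume (Metric.ball x₀ r) ≤ 1 - η := by
    intro r hr hrρ
    set B := Metric.ball x₀ r with hBdef
    set D := Metric.ball (x₀ + (r/2) • e) (δ * r) with hDdef
    have hδr : δ * r ≤ r / 4 := by nlinarith [hδ14, hr.le, hδ0.le]
    have hDB : D ⊆ B := by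
      intro x hx
      rw [hDdef, Metric.mem_ball] at hx
      rw [hBdef, Metric.mem_ball]
      have h1 : dist x x₀ ≤ dist x (x₀ + (r/2) • e) + dist (x₀ + (r/2) • e) x₀ :=
        dist_triangle _ _ _
      have h2 : dist (x₀ + (r/2) • e) x₀ = r / 2 := by
        rw [dist_eq_norm, add_sub_cancel_left, norm_smul, he, mul_one,
          Real.norm_eq_abs, abs_of_nonneg (by positivity)]
      linarith
    have hvolB : volume B = ENNReal.ofReal (r ^ N) * κ := by
      rw [hBdef, hκdef, Measure.addHaar_ball volume x₀ hr.le, finrank_euclideanSpace_fin]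
    have hvolD : volume D = η * volume B := by
      rw [hDdef, Measure.addHaar_ball volume _ (by positivity : (0:ℝ) ≤ δ * r),
        finrank_euclideanSpace_fin, hvolB, hηdef, mul_pow, ENNReal.ofReal_mul (by positivity),
        mul_assoc, hκdef]
    have hrN : ENNReal.ofReal (r ^ N) ≠ 0 := by
      simp only [ne_eq, ENNReal.ofReal_eq_zero, not_le]
      positivity
    have hvolBne : volume B ≠ 0 := by
      rw [hvolB]; exact mul_ne_zero hrN hκ0
    have hvolBtop : volume B ≠ ⊤ := by
      rw [hvolB]; exact ENNReal.mul_ne_top ENNReal.ofReal_ne_top hκtop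
    have hdisj : {x | w x = 0} ∩ B ⊆ B \ D := by
      intro x hx
      refine ⟨hx.2, fun hxD => ?_⟩
      have hpos := key r hr hrρ x hxD
      have hzero := hx.1
      simp only [Set.mem_setOf_eq] at hzero
      linarith
    have hvolDtop : volume D ≠ ⊤ := by
      rw [hvolD]
      exact ENNReal.mul_ne_top (by rw [hηdef]; exact ENNReal.ofReal_ne_top) hvolBtop
    have hstep : volume ({x | w x = 0} ∩ B) ≤ (1 - η) * volume B := by
      calc volume ({x | w x = 0} ∩ B) ≤ volume (B \ D) := measure_mono hdisj
        _ = volume B - volume D := measure_diff hDB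
            Metric.isOpen_ball.measurableSet.nullMeasurableSet hvolDtop
        _ = volume B - η * volume B := by rw [hvolD]
        _ = (1 - η) * volume B := by
            rw [ENNReal.sub_mul (fun _ _ => hvolBtop), one_mul]
    exact ENNReal.div_le_of_le_mul hstep
  -- contradiction
  have hev1 : ∀ᶠ r in nhdsWithin (0:ℝ) (Set.Ioi 0),
      (fun r : ℝ =>
        volume ({x | w x = 0} ∩ Metric.ball x₀ r) / volume (Metric.ball x₀ r)) r ∈
        Set.Ioi (1 - η) :=
    hT (Ioi_mem_nhds hη1)
  have hev2 : ∀ᶠ r in nhdsWithin (0:ℝ) (Set.Ioi 0), r ∈ Set.Ioo (0:ℝ) ρ :=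
    Ioo_mem_nhdsGT_of_mem ⟨le_refl 0, hρ⟩
  obtain ⟨r, h1, h2⟩ := (hev1.and hev2).exists
  exact absurd (hbound r h2.1 h2.2) (not_le.2 (Set.mem_Ioi.1 h1))
end

section
/- Let N ≥ 1, let U ⊆ ℝᴺ be open, let δ > 0, let q : U → ℝ be any function, and let w : U → ℝ be twice continuously differentiable on U with Δw(x) + q(x)·w(x) = δ for every x ∈ U, where Δw = ∑ᵢ ∂²w/∂xᵢ². Then the set {x ∈ U : w(x) = 0} has Lebesgue measure zero. -/
open MeasureTheory

/-- If a differentiable function vanishes on a measurable set, its derivative vanishes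
almost everywhere on that set. -/
lemma aux_fderiv_ae_zero {N : ℕ} (hN : 1 ≤ N) (s : Set (EuclideanSpace ℝ (Fin N)))
    (hs : MeasurableSet s) (f : EuclideanSpace ℝ (Fin N) → ℝ)
    (f' : EuclideanSpace ℝ (Fin N) → (EuclideanSpace ℝ (Fin N) →L[ℝ] ℝ))
    (hf' : ∀ x ∈ s, HasFDerivAt f (f' x) x) (hf0 : ∀ x ∈ s, f x = 0) :
    ∀ᵐ x ∂(volume.restrict s), f' x = 0 := by
  set i₀ : Fin N := ⟨0, hN⟩
  set v : EuclideanSpace ℝ (Fin N) := EuclideanSpace.single i₀ 1 with hv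
  have hvne : v ≠ 0 := by
    intro h
    have : v i₀ = 1 := by simp [hv]
    rw [h] at this
    simp at this
  set L : ℝ →L[ℝ] EuclideanSpace ℝ (Fin N) :=
    (ContinuousLinearMap.id ℝ ℝ).smulRight v with hL
  set g : EuclideanSpace ℝ (Fin N) → EuclideanSpace ℝ (Fin N) := fun x => L (f x) with hg
  have happrox : ApproximatesLinearOn g (0 : EuclideanSpace ℝ (Fin N) →L[ℝ]
      EuclideanSpace ℝ (Fin N)) s 0 := by
    intro x hx y hy
    simp [hg, hf0 x hx, hf0 y hy]
  have key := happrox.norm_fderiv_sub_le (μ := volume) hs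
    (fun x => L.comp (f' x))
    (fun x hx => ((L.hasFDerivAt).comp x (hf' x hx)).hasFDerivWithinAt)
  filter_upwards [key] with x hx
  have h0 : L.comp (f' x) = 0 := by
    have : ‖L.comp (f' x) - 0‖₊ = 0 := le_antisymm hx bot_le
    rw [sub_zero] at this
    simpa using this
  ext u
  have : L (f' x u) = 0 := by
    have := ContinuousLinearMap.ext_iff.1 h0 u
    simpa using this
  have : f' x u • v = 0 := by simpa [hL] using this
  rcases smul_eq_zero.1 this with h | h
  · simpa using h
  · exact absurd h hvne

/-- If `w` is `C²` on an open set `U` and satisfies `Δw + q·w = δ > 0` there, then the zero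
set of `w` in `U` has Lebesgue measure zero. -/
theorem stmt10 (N : ℕ) (hN : 1 ≤ N) (U : Set (EuclideanSpace ℝ (Fin N))) (hUopen : IsOpen U)
    (δ : ℝ) (hδ : 0 < δ) (q : EuclideanSpace ℝ (Fin N) → ℝ)
    (w : EuclideanSpace ℝ (Fin N) → ℝ) (hw : ContDiffOn ℝ 2 w U)
    (hpde : ∀ x ∈ U, lap w x + q x * w x = δ) :
    volume {x ∈ U | w x = 0} = 0 := by
  classical
  -- differentiability facts
  have hw1 : ∀ x ∈ U, HasFDerivAt w (fderiv ℝ w x) x := by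
    intro x hx
    have : DifferentiableAt ℝ w x :=
      ((hw.differentiableOn (by norm_num)) x hx).differentiableAt (hUopen.mem_nhds hx)
    exact this.hasFDerivAt
  have hwderiv : ContDiffOn ℝ 1 (fderiv ℝ w) U :=
    hw.fderiv_of_isOpen hUopen (by norm_num)
  -- the zero set
  set E : Set (EuclideanSpace ℝ (Fin N)) := {x ∈ U | w x = 0} with hE
  have hwcont : ContinuousOn w U := hw.continuousOn
  have hEmeas : MeasurableSet E := by
    have hopen : IsOpen (U ∩ w ⁻¹' {(0:ℝ)}ᶜ) :=
      hwcont.isOpen_inter_preimage hUopen isOpen_compl_singleton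
    have : E = U \ (U ∩ w ⁻¹' {(0:ℝ)}ᶜ) := by
      ext x
      simp only [hE, Set.mem_setOf_eq, Set.mem_diff, Set.mem_inter_iff, Set.mem_preimage,
        Set.mem_compl_iff, Set.mem_singleton_iff]
      tauto
    rw [this]
    exact hUopen.measurableSet.diff hopen.measurableSet
  -- the subset where the gradient vanishes
  set E' : Set (EuclideanSpace ℝ (Fin N)) := {x ∈ E | fderiv ℝ w x = 0} with hE'
  have hE'meas : MeasurableSet E' := by
    have hopen : IsOpen (U ∩ (fderiv ℝ w) ⁻¹' {(0 : EuclideanSpace ℝ (Fin N) →L[ℝ] ℝ)}ᶜ) :=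
      (hwderiv.continuousOn).isOpen_inter_preimage hUopen isOpen_compl_singleton
    have : E' = E \ (U ∩ (fderiv ℝ w) ⁻¹' {(0 : EuclideanSpace ℝ (Fin N) →L[ℝ] ℝ)}ᶜ) := by
      ext x
      simp only [hE', hE, Set.mem_setOf_eq, Set.mem_diff, Set.mem_inter_iff, Set.mem_preimage,
        Set.mem_compl_iff, Set.mem_singleton_iff]
      tauto
    rw [this]
    exact hEmeas.diff hopen.measurableSet
  -- Step 1 : a.e. on E the gradient vanishes
  have step1 : ∀ᵐ x ∂(volume.restrict E), fderiv ℝ w x = 0 :=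
    aux_fderiv_ae_zero hN E hEmeas w (fderiv ℝ w)
      (fun x hx => hw1 x hx.1) (fun x hx => hx.2)
  have hEdiff : volume (E \ E') = 0 := by
    have : E \ E' ⊆ {x ∈ E | fderiv ℝ w x ≠ 0} := by
      intro x hx
      exact ⟨hx.1, fun h => hx.2 ⟨hx.1, h⟩⟩
    refine measure_mono_null this ?_
    have := (ae_restrict_iff' hEmeas).1 step1
    rw [ae_iff] at this
    refine measure_mono_null (fun x hx => ?_) this
    simp only [Set.mem_setOf_eq]
    intro h
    exact hx.2 (h hx.1)
  -- Step 2 : second derivatives vanish a.e. on E'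
  have hgdiff : ∀ (i : Fin N), ∀ x ∈ U,
      HasFDerivAt (fun y => fderiv ℝ w y (EuclideanSpace.single i 1))
        (fderiv ℝ (fun y => fderiv ℝ w y (EuclideanSpace.single i 1)) x) x := by
    intro i x hx
    have hc : ContDiffOn ℝ 1 (fun y => fderiv ℝ w y (EuclideanSpace.single i 1)) U :=
      hwderiv.clm_apply contDiffOn_const
    have : DifferentiableAt ℝ (fun y => fderiv ℝ w y (EuclideanSpace.single i 1)) x :=
      ((hc.differentiableOn (by norm_num)) x hx).differentiableAt (hUopen.mem_nhds hx)
    exact this.hasFDerivAt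
  have step2 : ∀ (i : Fin N), ∀ᵐ x ∂(volume.restrict E'),
      fderiv ℝ (fun y => fderiv ℝ w y (EuclideanSpace.single i 1)) x = 0 := by
    intro i
    exact aux_fderiv_ae_zero hN E' hE'meas
      (fun y => fderiv ℝ w y (EuclideanSpace.single i 1)) _
      (fun x hx => hgdiff i x hx.1.1)
      (fun x hx => by show fderiv ℝ w x (EuclideanSpace.single i 1) = 0; rw [hx.2]; simp)
  have step2' : ∀ᵐ x ∂(volume.restrict E'), ∀ i : Fin N,
      fderiv ℝ (fun y => fderiv ℝ w y (EuclideanSpace.single i 1)) x = 0 :=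
    ae_all_iff.2 step2
  -- contradiction a.e. on E'
  have hE'null : volume E' = 0 := by
    have hfalse : ∀ᵐ x ∂(volume.restrict E'), False := by
      filter_upwards [step2', ae_restrict_mem hE'meas] with x hx hxE'
      have hxU : x ∈ U := hxE'.1.1
      have hxw : w x = 0 := hxE'.1.2
      have hlap : lap w x = 0 := by
        unfold lap
        rw [Finset.sum_eq_zero]
        intro i _
        rw [hx i]
        simp
      have := hpde x hxU
      rw [hlap, hxw, mul_zero, add_zero] at this
      exact absurd this.symm (ne_of_gt hδ)
    have : (volume.restrict E') Set.univ = 0 := by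
      simpa using hfalse
    rwa [Measure.restrict_apply_univ] at this
  have hsub : E ⊆ (E \ E') ∪ E' := fun x hx => by
    by_cases h : x ∈ E'
    · exact Set.mem_union_right _ h
    · exact Set.mem_union_left _ ⟨hx, h⟩
  have hle : volume E ≤ 0 := by
    calc volume E ≤ volume ((E \ E') ∪ E') := measure_mono hsub
      _ ≤ volume (E \ E') + volume E' := measure_union_le _ _
      _ = 0 := by rw [hEdiff, hE'null, add_zero]
  exact le_antisymm hle bot_le
end

section
/- Let (X, μ) be a measure space, let A ⊆ X be a measurable set, and let w : ℝ × X → ℝ be a function such that: (i) for each λ ∈ ℝ the function x ↦ w(λ, x) is measurable; (ii) for each x ∈ X the function λ ↦ w(λ, x) is continuous and nondecreasing; (iii) μ({x ∈ A : w(λ, x) > 0}) < ∞ for every λ ∈ ℝ; and (iv) μ({x ∈ A : w(λ, x) = 0}) = 0 for every λ ∈ ℝ. Define D(λ) = {x ∈ A : w(λ, x) > 0}. Then the function λ ↦ μ(D(λ)) is nondecreasing and continuous on ℝ. -/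
open MeasureTheory Filter Set Topology ENNReal

/-- Abstract version of Corollary 7.2: if `w(λ, x)` is measurable in `x`, continuous and
nondecreasing in `λ`, the sets `D(λ) = {x ∈ A : w(λ,x) > 0}` have finite measure, and the
level sets `{x ∈ A : w(λ,x) = 0}` are null, then `λ ↦ μ(D(λ))` is nondecreasing and
continuous. -/
theorem stmt11 {X : Type*} [MeasurableSpace X] (μ : Measure X)
    (A : Set X) (hA : MeasurableSet A) (w : ℝ → X → ℝ)
    (hmeas : ∀ l : ℝ, Measurable (w l))
    (hcont : ∀ x : X, Continuous fun l : ℝ => w l x)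
    (hmono : ∀ x : X, Monotone fun l : ℝ => w l x)
    (hfin : ∀ l : ℝ, μ {x ∈ A | 0 < w l x} < ⊤)
    (hnull : ∀ l : ℝ, μ {x ∈ A | w l x = 0} = 0) :
    Monotone (fun l : ℝ => μ {x ∈ A | 0 < w l x}) ∧
    Continuous (fun l : ℝ => μ {x ∈ A | 0 < w l x}) := by
  set D : ℝ → Set X := fun l => {x ∈ A | 0 < w l x} with hD
  set f : ℝ → ℝ≥0∞ := fun l => μ (D l) with hf
  have hDmeas : ∀ l, MeasurableSet (D l) := fun l =>
    hA.inter (measurableSet_lt measurable_const (hmeas l))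
  have hDmono : ∀ ⦃a b : ℝ⦄, a ≤ b → D a ⊆ D b := by
    intro a b hab x hx
    exact ⟨hx.1, lt_of_lt_of_le hx.2 (hmono x hab)⟩
  have hfmono : Monotone f := fun a b hab => measure_mono (hDmono hab)
  refine ⟨hfmono, ?_⟩
  rw [continuous_iff_continuousAt]
  intro l
  have hseq : Tendsto (fun n : ℕ => 1 / ((n : ℝ) + 1)) atTop (𝓝 0) :=
    tendsto_one_div_add_atTop_nhds_zero_nat
  have hpos : ∀ n : ℕ, (0 : ℝ) < 1 / ((n : ℝ) + 1) := fun n =>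
    by positivity
  rw [continuousAt_iff_continuous_left'_right']
  constructor
  · -- left continuity
    have key : Tendsto f (𝓝[<] l) (𝓝 (sSup (f '' Iio l))) :=
      hfmono.tendsto_nhdsLT l
    have heq : sSup (f '' Iio l) = f l := by
      apply le_antisymm
      · exact sSup_le (by rintro _ ⟨a, ha, rfl⟩; exact hfmono (le_of_lt ha))
      · -- f l = μ (⋃ n, D (l - 1/(n+1))) = ⨆ n, f (l - 1/(n+1)) ≤ sSup
        set t : ℕ → Set X := fun n => D (l - 1 / ((n : ℝ) + 1)) with ht
        have htmono : Monotone t := by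
          intro n m hnm
          apply hDmono
          have : 1 / ((m : ℝ) + 1) ≤ 1 / ((n : ℝ) + 1) := by
            apply one_div_le_one_div_of_le (by positivity)
            have : (n : ℝ) ≤ m := Nat.cast_le.2 hnm
            linarith
          linarith
        have hUnion : (⋃ n, t n) = D l := by
          apply Set.Subset.antisymm
          · exact Set.iUnion_subset fun n =>
              hDmono (by have := hpos n; linarith)
          · intro x hx
            have htw : Tendsto (fun n : ℕ => w (l - 1 / ((n : ℝ) + 1)) x) atTop
                (𝓝 (w l x)) := by
              have : Tendsto (fun n : ℕ => l - 1 / ((n : ℝ) + 1)) atTop (𝓝 l) := by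
                have := (tendsto_const_nhds (x := l) (f := atTop (α := ℕ))).sub hseq
                simpa using this
              exact ((hcont x).tendsto l).comp this
            obtain ⟨n, hn⟩ := (htw.eventually (eventually_gt_nhds hx.2)).exists
            exact Set.mem_iUnion.2 ⟨n, hx.1, hn⟩
        have : f l = ⨆ n, μ (t n) := by
          show μ (D l) = _
          rw [← hUnion]
          exact htmono.measure_iUnion
        rw [this]
        apply iSup_le
        intro n
        apply le_sSup
        exact ⟨l - 1 / ((n : ℝ) + 1), by simp only [mem_Iio]; linarith [hpos n], rfl⟩
    show Tendsto f (𝓝[<] l) (𝓝 (f l))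
    rw [← heq]
    exact key

  · -- right continuity
    have key : Tendsto f (𝓝[>] l) (𝓝 (sInf (f '' Ioi l))) :=
      hfmono.tendsto_nhdsGT l
    have heq : sInf (f '' Ioi l) = f l := by
      apply le_antisymm
      · set s : ℕ → Set X := fun n => D (l + 1 / ((n : ℝ) + 1)) with hs
        have hsanti : Antitone s := by
          intro n m hnm
          apply hDmono
          have : 1 / ((m : ℝ) + 1) ≤ 1 / ((n : ℝ) + 1) := by
            apply one_div_le_one_div_of_le (by positivity)
            have : (n : ℝ) ≤ m := Nat.cast_le.2 hnm
            linarith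
          linarith
        have hInter : μ (⋂ n, s n) = f l := by
          apply le_antisymm
          · -- ⋂ ⊆ D l ∪ null set
            have hsub : (⋂ n, s n) ⊆ D l ∪ {x ∈ A | w l x = 0} := by
              intro x hx
              have hxA : x ∈ A := (Set.mem_iInter.1 hx 0).1
              have hge : 0 ≤ w l x := by
                have htw : Tendsto (fun n : ℕ => w (l + 1 / ((n : ℝ) + 1)) x) atTop
                    (𝓝 (w l x)) := by
                  have : Tendsto (fun n : ℕ => l + 1 / ((n : ℝ) + 1)) atTop (𝓝 l) := by
                    have := (tendsto_const_nhds (x := l) (f := atTop (α := ℕ))).add hseq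
                    simpa using this
                  exact ((hcont x).tendsto l).comp this
                exact le_of_tendsto_of_tendsto' tendsto_const_nhds htw
                  fun n => le_of_lt (Set.mem_iInter.1 hx n).2
              rcases lt_or_eq_of_le hge with h | h
              · exact Or.inl ⟨hxA, h⟩
              · exact Or.inr ⟨hxA, h.symm⟩
            calc μ (⋂ n, s n) ≤ μ (D l ∪ {x ∈ A | w l x = 0}) := measure_mono hsub
              _ ≤ μ (D l) + μ {x ∈ A | w l x = 0} := measure_union_le _ _
              _ = f l := by rw [hnull l, add_zero]
          · exact measure_mono (Set.subset_iInter fun n =>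
              hDmono (by have := hpos n; linarith))
        have hmeq : μ (⋂ n, s n) = ⨅ n, μ (s n) :=
          hsanti.measure_iInter (fun n => (hDmeas _).nullMeasurableSet)
            ⟨0, (hfin _).ne⟩
        calc sInf (f '' Ioi l) ≤ ⨅ n, μ (s n) := by
              apply le_iInf; intro n
              apply sInf_le
              exact ⟨l + 1 / ((n : ℝ) + 1), by simp only [mem_Ioi]; linarith [hpos n], rfl⟩
          _ = μ (⋂ n, s n) := hmeq.symm
          _ = f l := hInter
      · exact le_sInf (by rintro _ ⟨a, ha, rfl⟩; exact hfmono (le_of_lt ha))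
    show Tendsto f (𝓝[>] l) (𝓝 (f l))
    rw [← heq]
    exact key
end

section
/- Let f be a bistable nonlinearity (as in the context). Then there exists δ₀ > 0 such that for every δ ∈ (0, δ₀) there exist b ∈ (α, 1) with f(b) = δ, f′(b) < 0 and ∫₀ᵇ (f(s) − δ) ds > 0, and a unique function ρ : ℝ → ℝ, continuous on ℝ and twice continuously differentiable on (−∞, 0), such that ρ″(x) + f(ρ(x)) = δ for all x < 0, ρ(x) > 0 and ρ′(x) < 0 for all x < 0, ρ(x) = 0 for all x ≥ 0, and ρ(x) → b as x → −∞. -/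
open Filter Set intervalIntegral

namespace Stmt15

noncomputable def G (f : ℝ → ℝ) (δ r : ℝ) : ℝ := ∫ t in (0:ℝ)..r, (f t - δ)
noncomputable def q (f : ℝ → ℝ) (δ b s : ℝ) : ℝ := G f δ b - G f δ s
noncomputable def h (f : ℝ → ℝ) (δ b s : ℝ) : ℝ := Real.sqrt (2 * q f δ b s)
noncomputable def T (f : ℝ → ℝ) (δ b r : ℝ) : ℝ := -∫ s in (0:ℝ)..r, (h f δ b s)⁻¹

variable {f : ℝ → ℝ} {δ b : ℝ}

theorem hasDerivAt_G (hf : Continuous f) (s : ℝ) :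
    HasDerivAt (G f δ) (f s - δ) s :=
  intervalIntegral.integral_hasDerivAt_right
      ((hf.sub continuous_const).intervalIntegrable 0 s)
      ((hf.sub continuous_const).stronglyMeasurableAtFilter _ _)
      (hf.sub continuous_const).continuousAt

theorem continuous_G (hf : Continuous f) : Continuous (G f δ) := by
  have : Differentiable ℝ (G f δ) := fun s => (hasDerivAt_G hf s).differentiableAt
  exact this.continuous

theorem hasDerivAt_q (hf : Continuous f) (s : ℝ) :
    HasDerivAt (q f δ b) (δ - f s) s := by
  have := (hasDerivAt_G (δ := δ) hf s).const_sub (G f δ b)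
  rw [neg_sub] at this
  exact this

theorem continuous_q (hf : Continuous f) : Continuous (q f δ b) :=
  continuous_const.sub (continuous_G hf)

theorem continuous_h (hf : Continuous f) : Continuous (h f δ b) :=
  Real.continuous_sqrt.comp (continuous_const.mul (continuous_q hf))

theorem hasDerivAt_h (hf : Continuous f) {s : ℝ} (hq : 0 < q f δ b s) :
    HasDerivAt (h f δ b) ((δ - f s) / h f δ b s) s := by
  have h1 : HasDerivAt (fun s => 2 * q f δ b s) (2 * (δ - f s)) s :=
    (hasDerivAt_q hf s).const_mul 2
  have h2 := h1.sqrt (by positivity)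
  have he : (2 * (δ - f s)) / (2 * Real.sqrt (2 * q f δ b s)) = (δ - f s) / h f δ b s := by
    rw [h, mul_div_mul_left _ _ (two_ne_zero)]
  rw [← he]
  exact h2

theorem h_pos (hq : 0 < q f δ b s) : 0 < h f δ b s := Real.sqrt_pos.2 (by linarith)

theorem hinv_integrable (hf : Continuous f) {r : ℝ} (hr : r ∈ Ico (0:ℝ) b)
    (hq : ∀ s ∈ Ico (0:ℝ) b, 0 < q f δ b s) :
    IntervalIntegrable (fun s => (h f δ b s)⁻¹) MeasureTheory.volume 0 r := by
  apply ContinuousOn.intervalIntegrable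
  apply (continuous_h hf).continuousOn.inv₀
  intro t ht
  rw [uIcc_of_le hr.1] at ht
  exact (h_pos (hq t ⟨ht.1, lt_of_le_of_lt ht.2 hr.2⟩)).ne'

theorem hasDerivAt_T (hf : Continuous f) {r : ℝ} (hr : r ∈ Ico (0:ℝ) b)
    (hq : ∀ s ∈ Ico (0:ℝ) b, 0 < q f δ b s) :
    HasDerivAt (T f δ b) (-(h f δ b r)⁻¹) r := by
  have hd : HasDerivAt (fun u => ∫ s in (0:ℝ)..u, (h f δ b s)⁻¹) ((h f δ b r)⁻¹) r := by
    apply intervalIntegral.integral_hasDerivAt_right (hinv_integrable hf hr hq)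
    · exact (((continuous_h hf).measurable.inv).stronglyMeasurable).stronglyMeasurableAtFilter
    · exact ((continuous_h hf).continuousAt).inv₀ (h_pos (hq r hr)).ne'
  exact hd.neg

theorem T_zero : T f δ b 0 = 0 := by simp [T]

theorem strictAntiOn_T (hf : Continuous f) (hq : ∀ s ∈ Ico (0:ℝ) b, 0 < q f δ b s) :
    StrictAntiOn (T f δ b) (Ico 0 b) := by
  apply strictAntiOn_of_deriv_neg (convex_Ico 0 b)
  · intro r hr
    exact (hasDerivAt_T hf hr hq).continuousAt.continuousWithinAt
  · intro r hr
    rw [interior_Ico] at hr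
    have hr' : r ∈ Ico (0:ℝ) b := ⟨hr.1.le, hr.2⟩
    rw [(hasDerivAt_T hf hr' hq).deriv]
    simp [h_pos (hq r hr')]

theorem q_eq (hf : Continuous f) (s : ℝ) :
    q f δ b s = ∫ t in s..b, (f t - δ) := by
  rw [q, G, G, ← intervalIntegral.integral_interval_sub_left (f := fun t => f t - δ)
    ((hf.sub continuous_const).intervalIntegrable 0 b)
    ((hf.sub continuous_const).intervalIntegrable 0 s)]

theorem exists_q_bound (hf : ContDiff ℝ 1 f) (hfb : f b = δ) (hb : 0 < b) :
    ∃ L : ℝ, 1 ≤ L ∧ ∀ s ∈ Icc (0:ℝ) b, q f δ b s ≤ L * (b - s) ^ 2 / 2 := by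
  obtain ⟨L₀, hL₀⟩ := (isCompact_Icc (a := (0:ℝ)) (b := b)).exists_bound_of_continuousOn
    ((hf.continuous_deriv le_rfl).continuousOn)
  refine ⟨max L₀ 1, le_max_right _ _, fun s hs => ?_⟩
  set L := max L₀ 1 with hL
  have hL1 : (1:ℝ) ≤ L := le_max_right _ _
  -- pointwise bound : f t - δ ≤ L * (b - t) for t ∈ [s, b]
  have key : ∀ t ∈ Icc s b, f t - δ ≤ L * (b - t) := by
    intro t ht
    rcases eq_or_lt_of_le ht.2 with heq | htb
    · rw [heq, hfb]
      simp only [sub_self, mul_zero, le_refl]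
    · obtain ⟨c, hc, hc'⟩ := exists_hasDerivAt_eq_slope f (deriv f) htb
        (hf.continuous.continuousOn)
        (fun x _ => (hf.differentiable one_ne_zero).differentiableAt.hasDerivAt)
      have hcmem : c ∈ Icc (0:ℝ) b := ⟨le_trans (le_trans hs.1 ht.1) hc.1.le, hc.2.le⟩
      have : f b - f t = deriv f c * (b - t) := by
        rw [hc', div_mul_cancel₀ _ (sub_ne_zero.2 htb.ne')]
      have hder : deriv f c ≥ -L := by
        have := hL₀ c hcmem
        have : |deriv f c| ≤ L := le_trans (by simpa using this) (le_max_left _ _)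
        linarith [abs_le.1 this |>.1]
      nlinarith [sub_pos.2 htb]
  have hsb : s ≤ b := hs.2
  calc q f δ b s = ∫ t in s..b, (f t - δ) := q_eq hf.continuous s
    _ ≤ ∫ t in s..b, L * (b - t) := by
        apply intervalIntegral.integral_mono_on hsb
          ((hf.continuous.sub continuous_const).intervalIntegrable s b)
          ((continuous_const.mul (continuous_const.sub continuous_id)).intervalIntegrable s b)
        exact key
    _ = L * (b - s) ^ 2 / 2 := by
        have : ∀ t ∈ uIcc s b, HasDerivAt (fun t => -(L * (b - t) ^ 2 / 2)) (L * (b - t)) t := by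
          intro t _
          have hd := ((((hasDerivAt_id t).const_sub b).pow 2).const_mul L).div_const 2 |>.neg
          refine hd.congr_deriv ?_
          norm_num
          ring
        rw [intervalIntegral.integral_eq_sub_of_hasDerivAt this
          ((continuous_const.mul (continuous_const.sub continuous_id)).intervalIntegrable s b)]
        ring

theorem T_le (hf : ContDiff ℝ 1 f) (hfb : f b = δ) (hb : 0 < b)
    (hq : ∀ s ∈ Ico (0:ℝ) b, 0 < q f δ b s) :
    ∃ L : ℝ, 1 ≤ L ∧ ∀ r ∈ Ico (0:ℝ) b,
      T f δ b r ≤ -(Real.sqrt L)⁻¹ * (Real.log b - Real.log (b - r)) := by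
  obtain ⟨L, hL1, hL⟩ := exists_q_bound hf hfb hb
  have hsL : 0 < Real.sqrt L := Real.sqrt_pos.2 (by linarith)
  refine ⟨L, hL1, fun r hr => ?_⟩
  have hbr : 0 < b - r := by linarith [hr.2]
  -- pointwise: (h s)⁻¹ ≥ (√L (b-s))⁻¹ on [0,r]
  have hpt : ∀ s ∈ Icc (0:ℝ) r, (Real.sqrt L * (b - s))⁻¹ ≤ (h f δ b s)⁻¹ := by
    intro s hs
    have hsb : s ∈ Ico (0:ℝ) b := ⟨hs.1, lt_of_le_of_lt hs.2 hr.2⟩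
    have hbs : 0 < b - s := by linarith [hsb.2]
    have h1 : h f δ b s ≤ Real.sqrt L * (b - s) := by
      rw [h]
      have : 2 * q f δ b s ≤ L * (b - s) ^ 2 := by
        have := hL s ⟨hs.1, hsb.2.le⟩; linarith
      calc Real.sqrt (2 * q f δ b s) ≤ Real.sqrt (L * (b - s) ^ 2) := Real.sqrt_le_sqrt this
        _ = Real.sqrt L * (b - s) := by
            rw [Real.sqrt_mul (by linarith), Real.sqrt_sq hbs.le]
    exact one_div_le_one_div_of_le (h_pos (hq s hsb)) h1 |>.trans_eq (by rw [one_div]) |>.trans_eq' (by rw [one_div])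
  -- integral comparison
  have hint1 : IntervalIntegrable (fun s => (Real.sqrt L * (b - s))⁻¹) MeasureTheory.volume 0 r := by
    apply ContinuousOn.intervalIntegrable
    apply ContinuousOn.inv₀
    · exact (continuous_const.mul (continuous_const.sub continuous_id)).continuousOn
    · intro s hs
      rw [uIcc_of_le hr.1] at hs
      have : 0 < b - s := by linarith [hs.2, hr.2]
      positivity
  have hcomp : ∫ s in (0:ℝ)..r, (Real.sqrt L * (b - s))⁻¹ ≤ ∫ s in (0:ℝ)..r, (h f δ b s)⁻¹ :=
    intervalIntegral.integral_mono_on hr.1 hint1 (hinv_integrable hf.continuous hr hq) hpt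
  -- compute left integral
  have hcalc : ∫ s in (0:ℝ)..r, (Real.sqrt L * (b - s))⁻¹
      = (Real.sqrt L)⁻¹ * (Real.log b - Real.log (b - r)) := by
    have hd : ∀ s ∈ uIcc (0:ℝ) r, HasDerivAt (fun s => -(Real.sqrt L)⁻¹ * Real.log (b - s))
        ((Real.sqrt L * (b - s))⁻¹) s := by
      intro s hs
      rw [uIcc_of_le hr.1] at hs
      have hbs : 0 < b - s := by linarith [hs.2, hr.2]
      have hlog : HasDerivAt (fun s : ℝ => Real.log (b - s)) ((b - s)⁻¹ * (-1)) s := by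
        exact (Real.hasDerivAt_log hbs.ne').comp s ((hasDerivAt_id s).const_sub b)
      have := hlog.const_mul (-(Real.sqrt L)⁻¹)
      refine this.congr_deriv ?_
      rw [mul_inv]
      ring
    rw [intervalIntegral.integral_eq_sub_of_hasDerivAt hd hint1]
    ring
  rw [T]
  have : (Real.sqrt L)⁻¹ * (Real.log b - Real.log (b - r)) ≤ ∫ s in (0:ℝ)..r, (h f δ b s)⁻¹ :=
    hcalc ▸ hcomp
  linarith

theorem T_surj (hf : ContDiff ℝ 1 f) (hfb : f b = δ) (hb : 0 < b)
    (hq : ∀ s ∈ Ico (0:ℝ) b, 0 < q f δ b s) :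
    ∀ x ≤ (0:ℝ), ∃ r ∈ Ico (0:ℝ) b, T f δ b r = x := by
  obtain ⟨L, hL1, hT⟩ := T_le hf hfb hb hq
  have hsL : 0 < Real.sqrt L := Real.sqrt_pos.2 (by linarith)
  intro x hx
  set r₁ := b - b * Real.exp (-(Real.sqrt L * (1 - x))) with hr₁def
  have hexp : Real.exp (-(Real.sqrt L * (1 - x))) < 1 := by
    rw [Real.exp_lt_one_iff]
    have : 0 < Real.sqrt L * (1 - x) := by nlinarith
    linarith
  have hexp0 : 0 < Real.exp (-(Real.sqrt L * (1 - x))) := Real.exp_pos _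
  have hr₁ : r₁ ∈ Ico (0:ℝ) b := by
    constructor
    · rw [hr₁def]; nlinarith
    · rw [hr₁def]; nlinarith
  have hTr₁ : T f δ b r₁ < x := by
    have h1 := hT r₁ hr₁
    have h2 : Real.log (b - r₁) = Real.log b + (-(Real.sqrt L * (1 - x))) := by
      rw [hr₁def]
      have : b - (b - b * Real.exp (-(Real.sqrt L * (1 - x)))) = b * Real.exp (-(Real.sqrt L * (1 - x))) := by ring
      rw [this, Real.log_mul hb.ne' hexp0.ne', Real.log_exp]
    rw [h2] at h1
    have : -(Real.sqrt L)⁻¹ * (Real.log b - (Real.log b + -(Real.sqrt L * (1 - x)))) = -(1-x) := by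
      field_simp
      ring
    rw [this] at h1
    linarith
  -- IVT
  have hcont : ContinuousOn (T f δ b) (Icc 0 r₁) := by
    intro s hs
    exact (hasDerivAt_T hf.continuous ⟨hs.1, lt_of_le_of_lt hs.2 hr₁.2⟩ hq).continuousAt.continuousWithinAt
  have hmem : x ∈ Icc (T f δ b r₁) (T f δ b 0) := by
    rw [T_zero]; exact ⟨hTr₁.le, hx⟩
  obtain ⟨r, hr, hrx⟩ := intermediate_value_Icc' hr₁.1 hcont hmem
  exact ⟨r, ⟨hr.1, lt_of_le_of_lt hr.2 hr₁.2⟩, hrx⟩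

open Classical in
noncomputable def rho (f : ℝ → ℝ) (δ b : ℝ) (x : ℝ) : ℝ :=
  if hx : ∃ r ∈ Ico (0:ℝ) b, T f δ b r = x then hx.choose else 0

section Rho

variable (hf : ContDiff ℝ 1 f) (hfb : f b = δ) (hb : 0 < b)
  (hq : ∀ s ∈ Ico (0:ℝ) b, 0 < q f δ b s)

include hf hfb hb hq

theorem rho_spec : ∀ x ≤ (0:ℝ), rho f δ b x ∈ Ico (0:ℝ) b ∧ T f δ b (rho f δ b x) = x := by
  intro x hx
  have hex := T_surj hf hfb hb hq x hx
  rw [rho, dif_pos ⟨hex.choose, hex.choose_spec⟩]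
  exact ⟨hex.choose_spec.1, hex.choose_spec.2⟩

theorem rho_zero_of_pos : ∀ x > (0:ℝ), rho f δ b x = 0 := by
  intro x hx
  rw [rho, dif_neg]
  rintro ⟨r, hr, hTr⟩
  have : T f δ b r ≤ T f δ b 0 :=
    (strictAntiOn_T hf.continuous hq).antitoneOn ⟨le_refl 0, hb⟩ hr hr.1
  rw [T_zero] at this
  linarith [hTr ▸ this]

theorem rho_zero : rho f δ b 0 = 0 := by
  obtain ⟨hmem, hT0⟩ := rho_spec hf hfb hb hq 0 le_rfl
  by_contra hne
  have hpos : 0 < rho f δ b 0 := lt_of_le_of_ne hmem.1 (Ne.symm hne)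
  have := (strictAntiOn_T hf.continuous hq) ⟨le_refl 0, hb⟩ hmem hpos
  rw [T_zero, hT0] at this
  exact lt_irrefl 0 this

theorem rho_eq_zero_of_nonneg : ∀ x ≥ (0:ℝ), rho f δ b x = 0 := by
  intro x hx
  rcases eq_or_lt_of_le hx with heq | hlt
  · rw [← heq]; exact rho_zero hf hfb hb hq
  · exact rho_zero_of_pos hf hfb hb hq x hlt

theorem rho_anti : ∀ {x y : ℝ}, y ≤ x → x ≤ 0 → rho f δ b x ≤ rho f δ b y := by
  intro x y hyx hx
  obtain ⟨hmx, hTx⟩ := rho_spec hf hfb hb hq x hx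
  obtain ⟨hmy, hTy⟩ := rho_spec hf hfb hb hq y (hyx.trans hx)
  by_contra hc
  push_neg at hc
  have := (strictAntiOn_T hf.continuous hq) hmy hmx hc
  rw [hTx, hTy] at this
  linarith

theorem rho_pos : ∀ x < (0:ℝ), 0 < rho f δ b x := by
  intro x hx
  obtain ⟨hmx, hTx⟩ := rho_spec hf hfb hb hq x hx.le
  rcases eq_or_lt_of_le hmx.1 with heq | hlt
  · exfalso; rw [← heq] at hTx; rw [T_zero] at hTx; linarith
  · exact hlt

theorem rho_window {x : ℝ} (hx : x ≤ 0) {r₂ : ℝ} (hr₂ : r₂ ∈ Ico (0:ℝ) b)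
    (hTr₂ : T f δ b r₂ < x) : ∀ y, T f δ b r₂ < y → y ≤ 0 → rho f δ b y < r₂ := by
  intro y hy hy0
  obtain ⟨hmy, hTy⟩ := rho_spec hf hfb hb hq y hy0
  by_contra hc
  push_neg at hc
  have := (strictAntiOn_T hf.continuous hq).antitoneOn hr₂ hmy hc
  rw [hTy] at this
  linarith

theorem rho_lower {r₁ : ℝ} (hr₁ : r₁ ∈ Ico (0:ℝ) b) :
    ∀ y ≤ (0:ℝ), y < T f δ b r₁ → r₁ < rho f δ b y := by
  intro y hy0 hy
  obtain ⟨hmy, hTy⟩ := rho_spec hf hfb hb hq y hy0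
  by_contra hc
  push_neg at hc
  have := (strictAntiOn_T hf.continuous hq).antitoneOn hmy hr₁ hc
  rw [hTy] at this
  linarith

end Rho

section Rho2

variable (hf : ContDiff ℝ 1 f) (hfb : f b = δ) (hb : 0 < b)
  (hq : ∀ s ∈ Ico (0:ℝ) b, 0 < q f δ b s)

include hf hfb hb hq

theorem continuous_rho : Continuous (rho f δ b) := by
  rw [continuous_iff_continuousAt]
  intro x
  rcases lt_trichotomy x 0 with hx | hx | hx
  · -- x < 0
    set r := rho f δ b x with hr
    have hrm : r ∈ Ico (0:ℝ) b := (rho_spec hf hfb hb hq x hx.le).1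
    have hrpos : 0 < r := rho_pos hf hfb hb hq x hx
    have hTx : T f δ b r = x := (rho_spec hf hfb hb hq x hx.le).2
    rw [Metric.continuousAt_iff]
    intro ε hε
    set r₁ := max (r - ε/2) (r/2) with hr₁def
    set r₂ := min (r + ε/2) ((r + b)/2) with hr₂def
    have hr₁r : r₁ < r := by rw [hr₁def]; apply max_lt <;> linarith
    have hr₁m : r₁ ∈ Ico (0:ℝ) b := by
      refine ⟨le_trans (by positivity) (le_max_right _ _), ?_⟩
      linarith [hrm.2]
    have hrr₂ : r < r₂ := by rw [hr₂def]; apply lt_min <;> linarith [hrm.2]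
    have hr₂m : r₂ ∈ Ico (0:ℝ) b := by
      refine ⟨by linarith [hrm.1], lt_of_le_of_lt (min_le_right _ _) (by linarith [hrm.2])⟩
    have hT₂ : T f δ b r₂ < x := by
      rw [← hTx]; exact (strictAntiOn_T hf.continuous hq) hrm hr₂m hrr₂
    have hT₁ : x < T f δ b r₁ := by
      rw [← hTx]; exact (strictAntiOn_T hf.continuous hq) hr₁m hrm hr₁r
    have hT₁neg : T f δ b r₁ < 0 := by
      have := (strictAntiOn_T hf.continuous hq) ⟨le_refl 0, hb⟩ hr₁m
        (lt_of_lt_of_le (by positivity) (le_max_right _ _))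
      rwa [T_zero] at this
    refine ⟨min (x - T f δ b r₂) (T f δ b r₁ - x), lt_min (by linarith) (by linarith), ?_⟩
    intro y hy
    rw [Real.dist_eq] at hy ⊢
    have hy₂ : T f δ b r₂ < y := by
      have := abs_lt.1 hy
      linarith [min_le_left (x - T f δ b r₂) (T f δ b r₁ - x), this.1]
    have hy₁ : y < T f δ b r₁ := by
      have := abs_lt.1 hy
      linarith [min_le_right (x - T f δ b r₂) (T f δ b r₁ - x), this.2]
    have hy0 : y ≤ 0 := by linarith
    have hup := rho_window hf hfb hb hq hx.le hr₂m hT₂ y hy₂ hy0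
    have hlo := rho_lower hf hfb hb hq hr₁m y hy0 hy₁
    rw [abs_lt]
    constructor
    · have : r - ε/2 ≤ r₁ := le_max_left _ _
      simp only [← hr]
      linarith
    · have : r₂ ≤ r + ε/2 := min_le_left _ _
      simp only [← hr]
      linarith
  · -- x = 0
    subst hx
    rw [Metric.continuousAt_iff]
    intro ε hε
    set r₂ := min (ε/2) (b/2) with hr₂def
    have hr₂m : r₂ ∈ Ico (0:ℝ) b := by
      constructor
      · apply le_min <;> positivity
      · exact lt_of_le_of_lt (min_le_right _ _) (by linarith)
    have hr₂pos : 0 < r₂ := lt_min (by linarith) (by linarith)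
    have hT₂ : T f δ b r₂ < 0 := by
      have := (strictAntiOn_T hf.continuous hq) ⟨le_refl 0, hb⟩ hr₂m hr₂pos
      rwa [T_zero] at this
    refine ⟨-(T f δ b r₂), by linarith, ?_⟩
    intro y hy
    rw [Real.dist_eq] at hy ⊢
    rw [sub_zero] at hy
    rw [rho_zero hf hfb hb hq, sub_zero]
    rcases le_or_gt y 0 with hy0 | hy0
    · have hy₂ : T f δ b r₂ < y := by
        have := abs_lt.1 hy
        linarith [this.1]
      have hup := rho_window hf hfb hb hq le_rfl hr₂m hT₂ y hy₂ hy0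
      have hlo : 0 ≤ rho f δ b y := (rho_spec hf hfb hb hq y hy0).1.1
      rw [abs_lt]
      constructor
      · linarith
      · have : r₂ ≤ ε/2 := min_le_left _ _
        linarith
    · rw [rho_zero_of_pos hf hfb hb hq y hy0]
      simpa using hε
  · -- x > 0
    have : (rho f δ b) =ᶠ[nhds x] (fun _ => 0) := by
      filter_upwards [Ioi_mem_nhds hx] with y hy
      exact rho_zero_of_pos hf hfb hb hq y hy
    exact ContinuousAt.congr continuousAt_const this.symm

end Rho2

section Rho3

variable (hf : ContDiff ℝ 1 f) (hfb : f b = δ) (hb : 0 < b)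
  (hq : ∀ s ∈ Ico (0:ℝ) b, 0 < q f δ b s)

include hf hfb hb hq

theorem hasDerivAt_rho {x : ℝ} (hx : x < 0) :
    HasDerivAt (rho f δ b) (-(h f δ b (rho f δ b x))) x := by
  obtain ⟨hrm, hTx⟩ := rho_spec hf hfb hb hq x hx.le
  have hT : HasDerivAt (T f δ b) (-(h f δ b (rho f δ b x))⁻¹) (rho f δ b x) :=
    hasDerivAt_T hf.continuous hrm hq
  have hne : -(h f δ b (rho f δ b x))⁻¹ ≠ 0 := by
    have := h_pos (hq _ hrm)
    simp [this.ne']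
  have hloc : ∀ᶠ y in nhds x, T f δ b (rho f δ b y) = y := by
    filter_upwards [Iio_mem_nhds hx] with y hy
    exact (rho_spec hf hfb hb hq y (le_of_lt hy)).2
  have := HasDerivAt.of_local_left_inverse
    ((continuous_rho hf hfb hb hq).continuousAt) (hTx ▸ hT) hne hloc
  have heq : (-(h f δ b (rho f δ b x))⁻¹)⁻¹ = -(h f δ b (rho f δ b x)) := by
    rw [inv_neg, inv_inv]
  rwa [heq] at this

theorem deriv_rho {x : ℝ} (hx : x < 0) :
    deriv (rho f δ b) x = -(h f δ b (rho f δ b x)) :=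
  (hasDerivAt_rho hf hfb hb hq hx).deriv

theorem hasDerivAt_deriv_rho {x : ℝ} (hx : x < 0) :
    HasDerivAt (deriv (rho f δ b)) (δ - f (rho f δ b x)) x := by
  obtain ⟨hrm, hTx⟩ := rho_spec hf hfb hb hq x hx.le
  have hcomp : HasDerivAt (fun y => -(h f δ b (rho f δ b y)))
      (δ - f (rho f δ b x)) x := by
    have h1 : HasDerivAt (h f δ b) ((δ - f (rho f δ b x)) / h f δ b (rho f δ b x))
        (rho f δ b x) := hasDerivAt_h hf.continuous (hq _ hrm)
    have h2 := (h1.comp x (hasDerivAt_rho hf hfb hb hq hx)).neg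
    have hpos := h_pos (hq _ hrm)
    have : -((δ - f (rho f δ b x)) / h f δ b (rho f δ b x) * -h f δ b (rho f δ b x))
        = δ - f (rho f δ b x) := by
      field_simp
    rwa [this] at h2
  apply hcomp.congr_of_eventuallyEq
  filter_upwards [Iio_mem_nhds hx] with y hy
  exact deriv_rho hf hfb hb hq hy

theorem rho_ode : ∀ x < (0:ℝ), deriv (deriv (rho f δ b)) x + f (rho f δ b x) = δ := by
  intro x hx
  rw [(hasDerivAt_deriv_rho hf hfb hb hq hx).deriv]
  ring

theorem rho_contDiffOn : ContDiffOn ℝ 2 (rho f δ b) (Iio 0) := by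
  have h2 : (2 : WithTop ℕ∞) = 1 + 1 := by norm_num
  rw [h2, contDiffOn_succ_iff_deriv_of_isOpen isOpen_Iio]
  refine ⟨fun x hx => ((hasDerivAt_rho hf hfb hb hq hx).differentiableAt).differentiableWithinAt,
    by intro hc; exact absurd hc (by norm_num), ?_⟩
  have h1 : (1 : WithTop ℕ∞) = 0 + 1 := by norm_num
  rw [h1, contDiffOn_succ_iff_deriv_of_isOpen isOpen_Iio]
  refine ⟨fun x hx => ((hasDerivAt_deriv_rho hf hfb hb hq hx).differentiableAt).differentiableWithinAt,
    by intro hc; exact absurd hc (by norm_num), ?_⟩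
  rw [contDiffOn_zero]
  have : ContinuousOn (fun x => δ - f (rho f δ b x)) (Iio 0) :=
    (continuous_const.sub (hf.continuous.comp (continuous_rho hf hfb hb hq))).continuousOn
  apply this.congr
  intro x hx
  exact (hasDerivAt_deriv_rho hf hfb hb hq hx).deriv

theorem rho_tendsto : Tendsto (rho f δ b) atBot (nhds b) := by
  rw [Metric.tendsto_nhds]
  intro ε hε
  rw [eventually_atBot]
  set r₀ := max (b - ε/2) (b/2) with hr₀def
  have hr₀m : r₀ ∈ Ico (0:ℝ) b := by
    constructor
    · exact le_trans (by positivity) (le_max_right _ _)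
    · apply max_lt <;> linarith
  refine ⟨T f δ b r₀, fun y hy => ?_⟩
  have hT₀neg : T f δ b r₀ ≤ 0 := by
    have := (strictAntiOn_T hf.continuous hq).antitoneOn ⟨le_refl 0, hb⟩ hr₀m hr₀m.1
    rwa [T_zero] at this
  have hy0 : y ≤ 0 := hy.trans hT₀neg
  -- rho y ≥ rho (T r₀) = r₀
  have hrT : rho f δ b (T f δ b r₀) = r₀ := by
    obtain ⟨hm, hT⟩ := rho_spec hf hfb hb hq (T f δ b r₀) hT₀neg
    exact (strictAntiOn_T hf.continuous hq).injOn hm hr₀m hT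
  have hge : r₀ ≤ rho f δ b y := by
    rw [← hrT]
    exact rho_anti hf hfb hb hq hy hT₀neg
  have hlt : rho f δ b y < b := (rho_spec hf hfb hb hq y hy0).1.2
  rw [Real.dist_eq, abs_lt]
  have : b - ε/2 ≤ r₀ := le_max_left _ _
  constructor <;> linarith

end Rho3

theorem q_self : q f δ b b = 0 := by simp [q]

section Uniq

variable (hf : ContDiff ℝ 1 f) (hfb : f b = δ) (hb : 0 < b)
  (hq : ∀ s ∈ Ico (0:ℝ) b, 0 < q f δ b s)

include hf hfb hb hq

theorem uniqueness (σ : ℝ → ℝ) (hc : Continuous σ) (hcd : ContDiffOn ℝ 2 σ (Iio 0))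
    (hode : ∀ x < (0:ℝ), deriv (deriv σ) x + f (σ x) = δ)
    (hsg : ∀ x < (0:ℝ), 0 < σ x ∧ deriv σ x < 0)
    (hz : ∀ x ≥ (0:ℝ), σ x = 0)
    (htd : Tendsto σ atBot (nhds b)) : σ = rho f δ b := by
  have h2 : (2 : WithTop ℕ∞) = 1 + 1 := by norm_num
  have hdiff : ∀ x < (0:ℝ), HasDerivAt σ (deriv σ x) x := by
    intro x hx
    exact ((hcd.differentiableOn (by norm_num)).differentiableAt
      (Iio_mem_nhds hx)).hasDerivAt
  have hcd1 : ContDiffOn ℝ 1 (deriv σ) (Iio 0) := by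
    rw [h2, contDiffOn_succ_iff_deriv_of_isOpen isOpen_Iio] at hcd
    exact hcd.2.2
  have hdiff2 : ∀ x < (0:ℝ), HasDerivAt (deriv σ) (deriv (deriv σ) x) x := by
    intro x hx
    exact ((hcd1.differentiableOn (by norm_num)).differentiableAt
      (Iio_mem_nhds hx)).hasDerivAt
  have hσ0 : σ 0 = 0 := hz 0 le_rfl
  have hstrict : StrictAntiOn σ (Iic 0) := by
    apply strictAntiOn_of_deriv_neg (convex_Iic 0) hc.continuousOn
    intro x hx
    rw [interior_Iic] at hx
    exact (hsg x hx).2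
  have hlt_b : ∀ x ≤ (0:ℝ), σ x < b := by
    intro x hx
    have h1 : σ x < σ (x - 1) := hstrict (by linarith : x - 1 ≤ (0:ℝ)) hx (by linarith)
    have h2 : σ (x - 1) ≤ b := by
      apply ge_of_tendsto htd
      rw [eventually_atBot]
      exact ⟨x - 1, fun y hy => hstrict.antitoneOn (by linarith : y ≤ (0:ℝ))
        (by linarith : x - 1 ≤ (0:ℝ)) hy⟩
    linarith
  have hmem : ∀ x < (0:ℝ), σ x ∈ Ico (0:ℝ) b := fun x hx => ⟨(hsg x hx).1.le, hlt_b x hx.le⟩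
  -- energy
  set E : ℝ → ℝ := fun x => (deriv σ x) ^ 2 / 2 - q f δ b (σ x) with hEdef
  have hE : ∀ x < (0:ℝ), HasDerivAt E 0 x := by
    intro x hx
    have h1 : HasDerivAt (fun x => (deriv σ x) ^ 2 / 2)
        ((2 : ℕ) * (deriv σ x) ^ 1 * deriv (deriv σ) x / 2) x :=
      ((hdiff2 x hx).pow 2).div_const 2
    have h2 : HasDerivAt (fun x => q f δ b (σ x)) ((δ - f (σ x)) * deriv σ x) x :=
      (hasDerivAt_q hf.continuous (σ x)).comp x (hdiff x hx)
    have h3 := h1.sub h2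
    have heq : (2 : ℕ) * (deriv σ x) ^ 1 * deriv (deriv σ) x / 2 - (δ - f (σ x)) * deriv σ x
        = 0 := by
      have hthis : δ - f (σ x) = deriv (deriv σ) x := by linarith [hode x hx]
      rw [hthis]
      push_cast
      ring
    rw [heq] at h3
    exact h3
  have hEconst : ∀ x < (0:ℝ), E x = E (-1) := by
    have key : ∀ u v : ℝ, u < v → v < 0 → E u = E v := by
      intro u v huv hv
      obtain ⟨c, hc', hc''⟩ := exists_hasDerivAt_eq_slope E (fun _ => 0) huv
        (fun y hy => (hE y (lt_of_le_of_lt hy.2 hv)).continuousAt.continuousWithinAt)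
        (fun y hy => hE y (lt_trans hy.2 hv))
      have hne : v - u ≠ 0 := by linarith
      have hc0 : (0:ℝ) = (E v - E u)/(v-u) := hc''
      have := (div_eq_iff hne).1 hc0.symm
      linarith
    intro x hx
    rcases lt_trichotomy x (-1) with h | h | h
    · exact key x (-1) h (by norm_num)
    · rw [h]
    · exact (key (-1) x h hx).symm
  set C := E (-1) with hCdef
  have hsq : ∀ x < (0:ℝ), (deriv σ x) ^ 2 = 2 * (C + q f δ b (σ x)) := by
    intro x hx
    have := hEconst x hx
    rw [hEdef] at this
    simp only at this
    linear_combination 2 * this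
  have hqσ : Tendsto (fun x => q f δ b (σ x)) atBot (nhds 0) := by
    have := ((continuous_q (δ := δ) (b := b) hf.continuous).continuousAt (x := b)).tendsto.comp htd
    rwa [q_self] at this
  have hC0 : 0 ≤ C := by
    have h1 : Tendsto (fun x => C + q f δ b (σ x)) atBot (nhds (C + 0)) :=
      tendsto_const_nhds.add hqσ
    rw [add_zero] at h1
    apply ge_of_tendsto h1
    rw [eventually_atBot]
    refine ⟨-1, fun y hy => ?_⟩
    nlinarith [hsq y (lt_of_le_of_lt hy (by norm_num)), sq_nonneg (deriv σ y)]
  have hdsig : ∀ x < (0:ℝ), deriv σ x = -Real.sqrt (2 * (C + q f δ b (σ x))) := by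
    intro x hx
    have h1 := hsq x hx
    have h2 : Real.sqrt ((deriv σ x) ^ 2) = -(deriv σ x) := by
      rw [Real.sqrt_sq_eq_abs, abs_of_neg (hsg x hx).2]
    rw [h1] at h2
    linarith
  have hCzero : C = 0 := by
    by_contra hC
    have hCpos : 0 < C := lt_of_le_of_ne hC0 (Ne.symm hC)
    set A := Real.sqrt (2 * C) with hAdef
    have hApos : 0 < A := Real.sqrt_pos.2 (by linarith)
    have htdd : Tendsto (deriv σ) atBot (nhds (-A)) := by
      have hcont : Tendsto (fun t : ℝ => -Real.sqrt (2 * (C + t))) (nhds 0) (nhds (-A)) := by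
        have : ContinuousAt (fun t : ℝ => -Real.sqrt (2 * (C + t))) 0 := by
          apply ContinuousAt.neg
          apply Real.continuous_sqrt.continuousAt.comp
          exact (continuous_const.mul (continuous_const.add continuous_id)).continuousAt
        simpa [hAdef] using this.tendsto
      apply Tendsto.congr' _ (hcont.comp hqσ)
      filter_upwards [eventually_lt_atBot (0:ℝ)] with x hx
      exact (hdsig x hx).symm
    have hev : ∀ᶠ x in atBot, deriv σ x ≤ -A/2 := by
      have := Metric.tendsto_nhds.1 htdd (A/2) (by linarith)
      filter_upwards [this] with x hx
      rw [Real.dist_eq, abs_lt] at hx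
      linarith [hx.2]
    rw [eventually_atBot] at hev
    obtain ⟨x₀', hx₀'⟩ := hev
    set x₀ := min x₀' (-1) with hx₀def
    have hx₀neg : x₀ < 0 := lt_of_le_of_lt (min_le_right _ _) (by norm_num)
    have hx₀le : ∀ x ≤ x₀, deriv σ x ≤ -A/2 := fun x hx =>
      hx₀' x (le_trans hx (min_le_left _ _))
    set x₁ := x₀ - 2 * (b + 1) / A with hx₁def
    have hx₁lt : x₁ < x₀ := by
      rw [hx₁def]
      have : 0 < 2 * (b + 1) / A := by positivity
      linarith
    obtain ⟨c, hcmem, hcslope⟩ := exists_hasDerivAt_eq_slope σ (deriv σ) hx₁lt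
      (hc.continuousOn)
      (fun y hy => hdiff y (lt_of_lt_of_le hy.2 hx₀neg.le))
    have hcle : deriv σ c ≤ -A/2 := hx₀le c hcmem.2.le
    have hslope : (σ x₀ - σ x₁) / (x₀ - x₁) ≤ -A/2 := hcslope ▸ hcle
    have hd : x₀ - x₁ = 2 * (b + 1) / A := by rw [hx₁def]; ring
    have hdpos : 0 < x₀ - x₁ := by linarith
    have h5 : σ x₀ - σ x₁ ≤ -A/2 * (x₀ - x₁) := by
      rw [div_le_iff₀ hdpos] at hslope
      linarith
    have h6 : -A/2 * (x₀ - x₁) = -(b+1) := by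
      rw [hd]; field_simp
    have h7 : σ x₁ ≥ σ x₀ + (b + 1) := by
      rw [h6] at h5; linarith
    have h8 : 0 < σ x₀ := (hsg x₀ hx₀neg).1
    have h9 : σ x₁ < b := hlt_b x₁ (by linarith)
    linarith
  have hds : ∀ x < (0:ℝ), deriv σ x = -(h f δ b (σ x)) := by
    intro x hx
    rw [hdsig x hx, hCzero, zero_add, h]
  -- g x = T (σ x) - x is constant 0
  set g : ℝ → ℝ := fun x => T f δ b (σ x) - x with hgdef
  have hg : ∀ x < (0:ℝ), HasDerivAt g 0 x := by
    intro x hx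
    have hT : HasDerivAt (T f δ b) (-(h f δ b (σ x))⁻¹) (σ x) :=
      hasDerivAt_T hf.continuous (hmem x hx) hq
    have h1 := (hT.comp x (hdiff x hx)).sub (hasDerivAt_id x)
    have hpos := h_pos (hq _ (hmem x hx))
    have heq : -(h f δ b (σ x))⁻¹ * deriv σ x - 1 = 0 := by
      rw [hds x hx]
      field_simp
      ring
    rwa [heq] at h1
  have hgconst : ∀ x < (0:ℝ), g x = g (-1) := by
    have key : ∀ u v : ℝ, u < v → v < 0 → g u = g v := by
      intro u v huv hv
      obtain ⟨c, hc', hc''⟩ := exists_hasDerivAt_eq_slope g (fun _ => 0) huv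
        (fun y hy => (hg y (lt_of_le_of_lt hy.2 hv)).continuousAt.continuousWithinAt)
        (fun y hy => hg y (lt_trans hy.2 hv))
      have hne : v - u ≠ 0 := by linarith
      have hc0 : (0:ℝ) = (g v - g u)/(v-u) := hc''
      have := (div_eq_iff hne).1 hc0.symm
      linarith
    intro x hx
    rcases lt_trichotomy x (-1) with hc | hc | hc
    · exact key x (-1) hc (by norm_num)
    · rw [hc]
    · exact (key (-1) x hc hx).symm
  have hgcont : ContinuousAt g 0 := by
    apply ContinuousAt.sub _ continuousAt_id
    have hT : ContinuousAt (T f δ b) (σ 0) := by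
      rw [hσ0]
      exact (hasDerivAt_T hf.continuous ⟨le_refl 0, hb⟩ hq).continuousAt
    exact hT.comp hc.continuousAt
  have hg0 : g 0 = 0 := by
    rw [hgdef]; simp only [hσ0, T_zero, sub_zero]
  have hgm1 : g (-1) = 0 := by
    have h1 : Tendsto g (nhdsWithin 0 (Iio 0)) (nhds (g 0)) :=
      (hgcont.tendsto).mono_left nhdsWithin_le_nhds
    have h2 : Tendsto g (nhdsWithin 0 (Iio 0)) (nhds (g (-1))) := by
      apply Tendsto.congr' _ tendsto_const_nhds
      filter_upwards [self_mem_nhdsWithin] with y hy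
      exact (hgconst y hy).symm
    rw [← hg0]
    exact tendsto_nhds_unique h2 h1
  have hTσ : ∀ x < (0:ℝ), T f δ b (σ x) = x := by
    intro x hx
    have := hgconst x hx
    rw [hgm1] at this
    rw [hgdef] at this
    simp only at this
    linarith
  funext x
  rcases lt_or_ge x 0 with hx | hx
  · obtain ⟨hrm, hTr⟩ := rho_spec hf hfb hb hq x hx.le
    exact (strictAntiOn_T hf.continuous hq).injOn (hmem x hx) hrm
      ((hTσ x hx).trans hTr.symm)
  · rw [hz x hx, rho_eq_zero_of_nonneg hf hfb hb hq x hx]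

end Uniq


theorem profile (hf : ContDiff ℝ 1 f) (hfb : f b = δ) (hb : 0 < b)
    (hq : ∀ s ∈ Ico (0:ℝ) b, 0 < q f δ b s) :
    ∃ ρ : ℝ → ℝ,
        (Continuous ρ ∧
         ContDiffOn ℝ 2 ρ (Set.Iio 0) ∧
         (∀ x < (0:ℝ), deriv (deriv ρ) x + f (ρ x) = δ) ∧
         (∀ x < (0:ℝ), 0 < ρ x ∧ deriv ρ x < 0) ∧
         (∀ x ≥ (0:ℝ), ρ x = 0) ∧
         Tendsto ρ atBot (nhds b)) ∧
        (∀ ρ' : ℝ → ℝ,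
          (Continuous ρ' ∧
           ContDiffOn ℝ 2 ρ' (Set.Iio 0) ∧
           (∀ x < (0:ℝ), deriv (deriv ρ') x + f (ρ' x) = δ) ∧
           (∀ x < (0:ℝ), 0 < ρ' x ∧ deriv ρ' x < 0) ∧
           (∀ x ≥ (0:ℝ), ρ' x = 0) ∧
           Tendsto ρ' atBot (nhds b)) →
          ρ' = ρ) := by
  refine ⟨rho f δ b, ⟨continuous_rho hf hfb hb hq, rho_contDiffOn hf hfb hb hq,
    rho_ode hf hfb hb hq, fun x hx => ⟨rho_pos hf hfb hb hq x hx, ?_⟩,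
    rho_eq_zero_of_nonneg hf hfb hb hq, rho_tendsto hf hfb hb hq⟩,
    fun σ hσ => uniqueness hf hfb hb hq σ hσ.1 hσ.2.1 hσ.2.2.1 hσ.2.2.2.1
      hσ.2.2.2.2.1 hσ.2.2.2.2.2⟩
  rw [deriv_rho hf hfb hb hq hx]
  have := h_pos (hq _ (rho_spec hf hfb hb hq x hx.le).1)
  linarith

end Stmt15

open Stmt15

set_option maxHeartbeats 1000000

/-- Existence, for all small `δ > 0`, of the stable zero `b ∈ (α,1)` of `s ↦ f(s) - δ` with
positive shifted mass, and of the unique profile `ρ` with `ρ'' + f(ρ) = δ` on `(-∞,0)`,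
`ρ > 0`, `ρ' < 0` there, `ρ = 0` on `[0,∞)`, and `ρ(-∞) = b`. -/
theorem stmt15 (f : ℝ → ℝ) (α : ℝ) (hf : ContDiff ℝ 1 f) (hα : α ∈ Set.Ioo (0:ℝ) 1)
    (hf0 : f 0 = 0) (hfα : f α = 0) (hf1 : f 1 = 0)
    (hd0 : deriv f 0 < 0) (hdα : 0 < deriv f α) (hd1 : deriv f 1 < 0)
    (hneg : ∀ s ∈ Set.Ioo (0:ℝ) α, f s < 0) (hpos : ∀ s ∈ Set.Ioo α (1:ℝ), 0 < f s)
    (hint : 0 < ∫ s in (0:ℝ)..1, f s) :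
    ∃ δ₀ > (0:ℝ), ∀ δ ∈ Set.Ioo (0:ℝ) δ₀, ∃ b ∈ Set.Ioo α 1,
      f b = δ ∧ deriv f b < 0 ∧ (0 < ∫ s in (0:ℝ)..b, (f s - δ)) ∧
      ∃ ρ : ℝ → ℝ,
        (Continuous ρ ∧
         ContDiffOn ℝ 2 ρ (Set.Iio 0) ∧
         (∀ x < (0:ℝ), deriv (deriv ρ) x + f (ρ x) = δ) ∧
         (∀ x < (0:ℝ), 0 < ρ x ∧ deriv ρ x < 0) ∧
         (∀ x ≥ (0:ℝ), ρ x = 0) ∧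
         Tendsto ρ atBot (nhds b)) ∧
        (∀ ρ' : ℝ → ℝ,
          (Continuous ρ' ∧
           ContDiffOn ℝ 2 ρ' (Set.Iio 0) ∧
           (∀ x < (0:ℝ), deriv (deriv ρ') x + f (ρ' x) = δ) ∧
           (∀ x < (0:ℝ), 0 < ρ' x ∧ deriv ρ' x < 0) ∧
           (∀ x ≥ (0:ℝ), ρ' x = 0) ∧
           Tendsto ρ' atBot (nhds b)) →
          ρ' = ρ) := by
  obtain ⟨hα0, hα1⟩ := hα
  -- negativity of deriv f near 1
  have hdc : Continuous (deriv f) := hf.continuous_deriv le_rfl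
  have hev : ∀ᶠ t in nhds (1:ℝ), deriv f t < 0 :=
    (hdc.continuousAt (x := 1)).eventually_lt_const hd1
  rw [Metric.eventually_nhds_iff] at hev
  obtain ⟨ε, hε, hεd⟩ := hev
  set η := min (ε/2) ((1-α)/2) with hηdef
  have hη0 : 0 < η := lt_min (by linarith) (by linarith)
  have hηα : 1 - η > α := by
    have : η ≤ (1-α)/2 := min_le_right _ _
    linarith
  have hη1 : 1 - η < 1 := by linarith
  have hderη : ∀ t, 1 - η ≤ t → t ≤ 1 → deriv f t < 0 := by
    intro t h1 h2
    apply hεd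
    rw [Real.dist_eq, abs_lt]
    have : η ≤ ε/2 := min_le_left _ _
    constructor <;> linarith
  have hanti : StrictAntiOn f (Icc (1-η) 1) := by
    apply strictAntiOn_of_deriv_neg (convex_Icc _ _) hf.continuous.continuousOn
    intro t ht
    rw [interior_Icc] at ht
    exact hderη t ht.1.le ht.2.le
  -- lower bound m for tail integrals
  have hΦcont : ContinuousOn (fun s => ∫ t in s..(1:ℝ), f t) (Icc 0 (1-η)) := by
    have : Continuous (fun s => ∫ t in s..(1:ℝ), f t) := by
      have h1 : Continuous (fun s => ∫ t in (0:ℝ)..s, f t) := by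
        have : Differentiable ℝ (fun s => ∫ t in (0:ℝ)..s, f t) := fun s =>
          (intervalIntegral.integral_hasDerivAt_right (hf.continuous.intervalIntegrable 0 s)
            (hf.continuous.stronglyMeasurableAtFilter _ _)
            hf.continuous.continuousAt).differentiableAt
        exact this.continuous
      have h2 : ∀ s : ℝ, ∫ t in s..(1:ℝ), f t
          = (∫ t in (0:ℝ)..1, f t) - ∫ t in (0:ℝ)..s, f t := by
        intro s
        rw [eq_sub_iff_add_eq, add_comm]
        exact intervalIntegral.integral_add_adjacent_intervals
          (hf.continuous.intervalIntegrable 0 s) (hf.continuous.intervalIntegrable s 1)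
      exact (continuous_const.sub h1).congr fun s => (h2 s).symm
    exact this.continuousOn
  obtain ⟨s₀, hs₀mem, hs₀min'⟩ := (isCompact_Icc (a := (0:ℝ)) (b := 1-η)).exists_isMinOn
    ⟨0, by constructor <;> [rfl; linarith]⟩ hΦcont
  have hs₀min : ∀ s ∈ Icc (0:ℝ) (1-η), (∫ t in s₀..(1:ℝ), f t) ≤ ∫ t in s..(1:ℝ), f t :=
    fun s hs => hs₀min' hs
  set m := ∫ t in s₀..(1:ℝ), f t with hmdef
  have hfle0 : ∀ x ∈ Icc (0:ℝ) α, f x ≤ 0 := by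
    intro x hx
    rcases eq_or_lt_of_le hx.1 with he | hl
    · rw [← he, hf0]
    · rcases eq_or_lt_of_le hx.2 with he | hl2
      · rw [he, hfα]
      · exact (hneg x ⟨hl, hl2⟩).le
  have hm : 0 < m := by
    rcases le_or_gt α s₀ with hcase | hcase
    · apply intervalIntegral.intervalIntegral_pos_of_pos_on
        (hf.continuous.intervalIntegrable _ _)
      · intro t ht
        exact hpos t ⟨lt_of_le_of_lt hcase ht.1, ht.2⟩
      · linarith [hs₀mem.2]
    · have hsplit : m = (∫ t in (0:ℝ)..1, f t) - ∫ t in (0:ℝ)..s₀, f t := by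
        rw [hmdef, eq_sub_iff_add_eq, add_comm]
        exact intervalIntegral.integral_add_adjacent_intervals
          (hf.continuous.intervalIntegrable 0 s₀) (hf.continuous.intervalIntegrable s₀ 1)
      have hnp : ∫ t in (0:ℝ)..s₀, f t ≤ 0 := by
        have h1 : 0 ≤ ∫ t in (0:ℝ)..s₀, -f t := by
          apply intervalIntegral.integral_nonneg hs₀mem.1
          intro u hu
          have := hfle0 u ⟨hu.1, le_trans hu.2 hcase.le⟩
          linarith
        rw [intervalIntegral.integral_neg] at h1
        linarith
      rw [hsplit]
      linarith
  -- bound K for |f| on [0,1]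
  obtain ⟨K₀, hK₀⟩ := (isCompact_Icc (a := (0:ℝ)) (b := 1)).exists_bound_of_continuousOn
    hf.continuous.continuousOn
  set K := max K₀ 1 with hKdef
  have hK1 : (1:ℝ) ≤ K := le_max_right _ _
  have hKb : ∀ x ∈ Icc (0:ℝ) 1, |f x| ≤ K := fun x hx =>
    le_trans (by simpa using hK₀ x hx) (le_max_left _ _)
  set ε' := min η (m/(6*K)) with hε'def
  have hε'0 : 0 < ε' := lt_min hη0 (by positivity)
  have hε'η : ε' ≤ η := min_le_left _ _
  have hε'K : K * ε' ≤ m/6 := by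
    have h1 : ε' ≤ m/(6*K) := min_le_right _ _
    calc K * ε' ≤ K * (m/(6*K)) := mul_le_mul_of_nonneg_left h1 (by linarith)
      _ = m/6 := by
          have hKne : K ≠ 0 := by linarith
          field_simp
  have h1ε'α : α < 1 - ε' := by linarith
  have h1ε'1 : 1 - ε' < 1 := by linarith
  have hfε' : 0 < f (1 - ε') := hpos _ ⟨h1ε'α, h1ε'1⟩
  refine ⟨min (f (1 - ε')) (m/3), lt_min hfε' (by linarith), ?_⟩
  intro δ hδ
  obtain ⟨hδ0, hδlt⟩ := hδ
  have hδf : δ < f (1 - ε') := lt_of_lt_of_le hδlt (min_le_left _ _)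
  have hδm : δ < m/3 := lt_of_lt_of_le hδlt (min_le_right _ _)
  -- find b by IVT
  have hIVT := intermediate_value_Ioo' (le_of_lt h1ε'1)
    hf.continuous.continuousOn (a := 1 - ε') (b := 1)
  have hδmem : δ ∈ Ioo (f 1) (f (1 - ε')) := by rw [hf1]; exact ⟨hδ0, hδf⟩
  obtain ⟨b, hbmem, hfb⟩ := hIVT hδmem
  have hbα : α < b := lt_trans h1ε'α hbmem.1
  have hb1 : b < 1 := hbmem.2
  have hb0 : 0 < b := by linarith [hα0]
  have hbη : 1 - η < b := by linarith [hbmem.1, hε'η]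
  have hdb : deriv f b < 0 := hderη b (by linarith) hb1.le
  -- positivity of q on [0, b)
  have hq : ∀ s ∈ Ico (0:ℝ) b, 0 < q f δ b s := by
    intro s hs
    rw [q_eq hf.continuous]
    rcases le_or_gt (1-η) s with hcase | hcase
    · -- s in [1-η, b) : integrand positive
      apply intervalIntegral.intervalIntegral_pos_of_pos_on
        ((hf.continuous.sub continuous_const).intervalIntegrable _ _)
      · intro t ht
        have htmem : t ∈ Icc (1-η) 1 := ⟨le_trans hcase ht.1.le, by linarith [ht.2]⟩
        have := hanti htmem ⟨by linarith [hbmem.1, hε'η], hb1.le⟩ ht.2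
        rw [hfb] at this
        show 0 < f t - δ
        linarith
      · exact hs.2
    · -- s in [0, 1-η)
      have hsplit : ∫ t in s..b, (f t - δ)
          = (∫ t in s..b, f t) - δ * (b - s) := by
        rw [intervalIntegral.integral_sub (hf.continuous.intervalIntegrable _ _)
          (intervalIntegrable_const)]
        simp [mul_comm]
      have hsplit2 : ∫ t in s..b, f t = (∫ t in s..(1:ℝ), f t) - ∫ t in b..(1:ℝ), f t := by
        rw [eq_sub_iff_add_eq]
        exact intervalIntegral.integral_add_adjacent_intervals
          (hf.continuous.intervalIntegrable s b) (hf.continuous.intervalIntegrable b 1)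
      have htail : |∫ t in b..(1:ℝ), f t| ≤ K * (1 - b) := by
        have := intervalIntegral.norm_integral_le_of_norm_le_const
          (f := f) (a := b) (b := 1) (C := K) ?_
        · rw [abs_of_nonneg (by linarith)] at this
          exact this
        · intro x hx
          rw [uIoc_of_le hb1.le] at hx
          exact hKb x ⟨by linarith [hx.1, hb0], hx.2⟩
      have hΦs : m ≤ ∫ t in s..(1:ℝ), f t := hs₀min s ⟨hs.1, by linarith⟩
      have h1b : 1 - b < ε' := by linarith [hbmem.1]
      have htail2 : ∫ t in b..(1:ℝ), f t ≤ m/6 := by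
        have h2 : K * (1 - b) ≤ K * ε' :=
          mul_le_mul_of_nonneg_left h1b.le (by linarith)
        have := (abs_le.1 htail).2
        linarith [hε'K]
      have hδb : δ * (b - s) ≤ m/3 := by
        have h1 : b - s ≤ 1 := by linarith [hs.1]
        have h2 : δ * (b - s) ≤ δ * 1 := mul_le_mul_of_nonneg_left h1 hδ0.le
        linarith
      rw [hsplit, hsplit2]
      linarith
  -- conclude
  have hmain := profile (δ := δ) (b := b) hf hfb hb0 hq
  have hq0 : 0 < ∫ s in (0:ℝ)..b, (f s - δ) := by
    have := hq 0 ⟨le_refl 0, hb0⟩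
    rw [q_eq hf.continuous] at this
    exact this
  exact ⟨b, ⟨hbα, hb1⟩, hfb, hdb, hq0, hmain⟩
end
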